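/- arXiv:math/0404336 — 7 statements merged into one kernel-verified Lean document; each statement's English description precedes it below -/
import Mathlib

section
/- Let X = (x_1 < … < x_n) and Y = (y_1 < … < y_n) be distinct strictly increasing n-tuples of real numbers with Y majorized by X. Then Y can be obtained from X by a finite sequence of simple nondegenerate contractions: there exist strictly increasing n-tuples X_1 = X, X_2, …, X_m = Y such that each X_{i+1} is obtained from X_i by replacing some pair of consecutive entries u < v by u + t, v − t with t ∈ (0, (v−u)/2). -/
open Finset

/-- Classical majorization: `x` is majorized by `y` (as `n`-tuples) iff
every convex function sums no larger on `x` than on `y`. -/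
def MajorizedOn (n : ℕ) (x y : ℕ → ℝ) : Prop :=
  ∀ f : ℝ → ℝ, ConvexOn ℝ Set.univ f →
    ∑ i ∈ Finset.range n, f (x i) ≤ ∑ i ∈ Finset.range n, f (y i)

/-- `y` is obtained from `x` (an `n`-tuple) by a simple nondegenerate contraction. -/
def SimpleNondegContraction (n : ℕ) (x y : ℕ → ℝ) : Prop :=
  ∃ k t : _, k + 1 < n ∧ (0 : ℝ) < t ∧ t < (x (k + 1) - x k) / 2 ∧
    y k = x k + t ∧ y (k + 1) = x (k + 1) - t ∧
    ∀ i < n, i ≠ k → i ≠ k + 1 → y i = x i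

/-!
With `d = Y - X`, majorization tested against the convex functions `± id` and `(X K - ·)⁺` says
that the partial sums of `d` are nonnegative and its total is zero. Take the first `k` with
`d k < 0` and the last `j < k` with `d j > 0`; strictly between them `X` agrees with `Y`.
Moving `t = min (d j) (-d k)` from `X k` to `X j` keeps the partial sums nonnegative and kills a
nonzero entry of `d`. This move is a cascade of simple contractions at `(j, j + 1)`, …,
`(k - 1, k)`; cut into portions smaller than the gaps of `Y`, every one of them is
nondegenerate. Finally, simple nondegenerate contractions preserve strict monotonicity.
-/

theorem Relation.ReflTransGen.exists_seq {α : Type*} {r : α → α → Prop} {a b : α}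
    (h : Relation.ReflTransGen r a b) :
    ∃ (m : ℕ) (c : ℕ → α), c 0 = a ∧ c m = b ∧ ∀ j < m, r (c j) (c (j + 1)) := by
  induction h with
  | refl => exact ⟨0, fun _ => a, rfl, rfl, by simp⟩
  | @tail _ b _ hb ih =>
    obtain ⟨m, c, hc0, hcm, hc⟩ := ih
    refine ⟨m + 1, Function.update c (m + 1) b, by simpa using hc0, by simp, fun j hj => ?_⟩
    rcases Nat.lt_succ_iff_lt_or_eq.1 hj with hj | rfl
    · simpa [Function.update_of_ne (show j ≠ m + 1 by omega),
        Function.update_of_ne (show j + 1 ≠ m + 1 by omega)] using hc j hj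
    · simpa [hcm] using hb

theorem Finset.card_filter_ne_zero_lt {ι M : Type*} [Zero M] [DecidableEq M] {s : Finset ι}
    {f g : ι → M} (hzero : ∀ i ∈ s, f i = 0 → g i = 0) {a : ι} (ha : a ∈ s)
    (hfa : f a ≠ 0) (hga : g a = 0) :
    #{i ∈ s | g i ≠ 0} < #{i ∈ s | f i ≠ 0} := by
  refine card_lt_card ((ssubset_iff_of_subset ?_).2 ⟨a, by simp [ha, hfa], by simp [hga]⟩)
  intro i
  simp only [mem_filter]
  exact fun ⟨hi, hgi⟩ => ⟨hi, fun hfi => hgi (hzero i hi hfi)⟩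

/-- Move the amount `t` from position `k` to position `j`. -/
def transfer (x : ℕ → ℝ) (j k : ℕ) (t : ℝ) : ℕ → ℝ :=
  x + Pi.single j t - Pi.single k t

section transfer

variable {x y : ℕ → ℝ} {i j k l : ℕ} {s t : ℝ}

theorem transfer_apply_left (hjk : j ≠ k) : transfer x j k t j = x j + t := by
  simp [transfer, hjk]

theorem transfer_apply_right (hjk : j ≠ k) : transfer x j k t k = x k - t := by
  simp [transfer, hjk.symm]

theorem transfer_apply_of_ne (hj : i ≠ j) (hk : i ≠ k) : transfer x j k t i = x i := by
  simp [transfer, hj, hk]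

theorem transfer_zero : transfer x j k 0 = x := by
  simp [transfer]

theorem transfer_transfer : transfer (transfer x j k s) j k t = transfer x j k (s + t) := by
  simp only [transfer, Pi.single_add]
  abel

theorem transfer_trans : transfer (transfer x j k t) k l t = transfer x j l t := by
  simp only [transfer]
  abel

theorem sub_transfer : y - transfer x j k t = transfer (y - x) k j t := by
  simp only [transfer]
  abel

theorem sum_range_transfer (K : ℕ) :
    ∑ i ∈ range K, transfer x j k t i =
      ∑ i ∈ range K, x i + (if j < K then t else 0) - (if k < K then t else 0) := by
  simp [transfer, sum_add_distrib, sum_sub_distrib, sum_pi_single']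

end transfer

section contraction

variable {n j k : ℕ} {s t : ℝ} {x y : ℕ → ℝ}

theorem simpleNondegContraction_transfer (hk : k + 1 < n) (ht : 0 < t)
    (htx : t < (x (k + 1) - x k) / 2) :
    SimpleNondegContraction n x (transfer x k (k + 1) t) :=
  ⟨k, t, hk, ht, htx, transfer_apply_left (by omega), transfer_apply_right (by omega),
    fun _ _ hik hik' => transfer_apply_of_ne hik hik'⟩

theorem SimpleNondegContraction.lt_succ (h : SimpleNondegContraction n x y)
    (hx : ∀ i, i + 1 < n → x i < x (i + 1)) : ∀ i, i + 1 < n → y i < y (i + 1) := by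
  obtain ⟨k, t, hk, ht, htx, hyk, hyk', hy⟩ := h
  intro i hi
  have hxi := hx i hi
  rcases lt_trichotomy (i + 1) k with hik | hik | hik
  · rw [hy i (by omega) (by omega) (by omega), hy (i + 1) hi (by omega) (by omega)]
    exact hxi
  · subst hik
    rw [hy i (by omega) (by omega) (by omega), hyk]
    linarith
  rcases lt_trichotomy i (k + 1) with hik' | rfl | hik'
  · obtain rfl : i = k := by omega
    rw [hyk, hyk']
    linarith
  · rw [hyk', hy (k + 2) hi (by omega) (by omega)]
    linarith
  · rw [hy i (by omega) (by omega) (by omega), hy (i + 1) hi (by omega) (by omega)]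
    exact hxi

theorem reflTransGen_transfer_of_gaps (hjk : j < k) (hk : k < n) (ht : 0 < t)
    (hj : 2 * t < x (j + 1) - x j) (hgap : ∀ i, j < i → i < k → t < x (i + 1) - x i) :
    Relation.ReflTransGen (SimpleNondegContraction n) x (transfer x j k t) := by
  induction k, hjk using Nat.le_induction with
  | base => exact .single (simpleNondegContraction_transfer hk ht (by linarith))
  | succ k hjk ih =>
    refine (ih (by omega) fun i hi hik => hgap i hi (by omega)).tail ?_
    rw [show transfer x j (k + 1) t = transfer (transfer x j k t) k (k + 1) t from
      transfer_trans.symm]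
    refine simpleNondegContraction_transfer hk ht ?_
    rw [transfer_apply_of_ne (by omega) (by omega), transfer_apply_right (by omega)]
    linarith [hgap k (by omega) (by omega)]

theorem reflTransGen_transfer_of_eqOn_Ioo (hjk : j < k) (hk : k < n) (hs : 0 < s)
    (hsj : s ≤ y j - x j) (hsk : s ≤ x k - y k) (hxy : ∀ i, j < i → i < k → x i = y i)
    (hgap : ∀ i, j ≤ i → i < k → s < y (i + 1) - y i) :
    Relation.ReflTransGen (SimpleNondegContraction n) x (transfer x j k s) := by
  refine reflTransGen_transfer_of_gaps hjk hk hs ?_ fun i hji hik => ?_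
  · have hgj := hgap j le_rfl hjk
    rcases eq_or_lt_of_le (Nat.succ_le_of_lt hjk) with rfl | hjk'
    · linarith
    · rw [hxy (j + 1) (by omega) hjk']
      linarith
  · have hgi := hgap i hji.le hik
    rw [hxy i hji hik]
    rcases eq_or_lt_of_le (Nat.succ_le_of_lt hik) with rfl | hik'
    · linarith
    · rw [hxy (i + 1) (by omega) hik']
      exact hgi

theorem reflTransGen_transfer (hjk : j < k) (hk : k < n) (ht : 0 < t)
    (htj : t ≤ y j - x j) (htk : t ≤ x k - y k) (hxy : ∀ i, j < i → i < k → x i = y i)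
    (hy : ∀ i, j ≤ i → i < k → y i < y (i + 1)) :
    Relation.ReflTransGen (SimpleNondegContraction n) x (transfer x j k t) := by
  have hsmall : ∀ᶠ N : ℕ in Filter.atTop, ∀ i ∈ Ico j k, t / N < y (i + 1) - y i :=
    (Filter.eventually_all_finset _).2 fun i hi =>
      (tendsto_const_div_atTop_nhds_zero_nat t).eventually
        (gt_mem_nhds (sub_pos.2 (hy i (mem_Ico.1 hi).1 (mem_Ico.1 hi).2)))
  obtain ⟨N, hNgap, hN⟩ := (hsmall.and (Filter.eventually_gt_atTop 0)).exists
  set s := t / N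
  have hs : 0 < s := by positivity
  have hNs : N * s = t := mul_div_cancel₀ t (by positivity)
  suffices h : ∀ p ≤ N,
      Relation.ReflTransGen (SimpleNondegContraction n) x (transfer x j k (p * s)) by
    simpa [hNs] using h N le_rfl
  intro p hp
  induction p with
  | zero => simpa [transfer_zero] using Relation.ReflTransGen.refl
  | succ p ih =>
    have hps : (p + 1 : ℝ) * s ≤ t := hNs ▸ by gcongr; exact_mod_cast hp
    refine (ih (by omega)).trans ?_
    rw [Nat.cast_succ, add_mul, one_mul, ← transfer_transfer]
    refine reflTransGen_transfer_of_eqOn_Ioo hjk hk hs ?_ ?_ ?_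
      fun i hji hik => hNgap i (mem_Ico.2 ⟨hji, hik⟩)
    · rw [transfer_apply_left hjk.ne]
      linarith
    · rw [transfer_apply_right hjk.ne]
      linarith
    · intro i hji hik
      rw [transfer_apply_of_ne (by omega) (by omega), hxy i hji hik]

end contraction

/-- For increasing `n`-tuples, `y ≺ x` says exactly `IsBalanced n (y - x)`. -/
structure IsBalanced (n : ℕ) (d : ℕ → ℝ) : Prop where
  sum_range_nonneg : ∀ K ≤ n, 0 ≤ ∑ i ∈ range K, d i
  sum_range_eq_zero : ∑ i ∈ range n, d i = 0

namespace IsBalanced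

variable {n : ℕ} {d : ℕ → ℝ}

theorem exists_pos_neg (hd : IsBalanced n d) (hne : ∃ i < n, d i ≠ 0) :
    ∃ j k, j < k ∧ k < n ∧ 0 < d j ∧ d k < 0 ∧ ∀ i, j < i → i < k → d i = 0 := by
  have hneg : ∃ k, k < n ∧ d k < 0 := by
    by_contra! hnonneg
    obtain ⟨i, hi, hdi⟩ := hne
    exact hdi ((sum_eq_zero_iff_of_nonneg fun i hi => hnonneg i (mem_range.1 hi)).1
      hd.sum_range_eq_zero i (mem_range.2 hi))
  classical
  set k := Nat.find hneg
  obtain ⟨hk, hdk⟩ : k < n ∧ d k < 0 := Nat.find_spec hneg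
  have hbelow : ∀ i < k, 0 ≤ d i := fun i hi =>
    not_lt.1 fun hdi => Nat.find_min hneg hi ⟨by omega, hdi⟩
  have hpos : ∃ i ≤ k, 0 < d i := by
    by_contra! hnpos
    have hsum := hd.sum_range_nonneg (k + 1) hk
    rw [sum_range_succ, sum_eq_zero fun i hi =>
      le_antisymm (hnpos i (mem_range.1 hi).le) (hbelow i (mem_range.1 hi))] at hsum
    linarith
  obtain ⟨i₀, hi₀, hdi₀⟩ := hpos
  set j := Nat.findGreatest (fun i => 0 < d i) k
  have hdj : 0 < d j := Nat.findGreatest_spec (P := fun i => 0 < d i) hi₀ hdi₀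
  have hjk : j < k := lt_of_le_of_ne (Nat.findGreatest_le k) fun h => by
    rw [h] at hdj; linarith
  refine ⟨j, k, hjk, hk, hdj, hdk, fun i hji hik => ?_⟩
  exact le_antisymm (not_lt.1 (Nat.findGreatest_is_greatest hji hik.le)) (hbelow i hik)

theorem transfer {j k : ℕ} {t : ℝ} (hd : IsBalanced n d) (hjk : j < k) (hk : k < n)
    (ht : t ≤ d j) (hzero : ∀ i, j < i → i < k → d i = 0) :
    IsBalanced n (transfer d k j t) where
  sum_range_nonneg K hK := by
    rw [sum_range_transfer]
    by_cases hjK : j < K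
    · by_cases hkK : k < K
      · simpa [hjK, hkK] using hd.sum_range_nonneg K hK
      have hmid : ∑ i ∈ Ico (j + 1) K, d i = 0 :=
        sum_eq_zero fun i hi => have := mem_Ico.1 hi; hzero i (by omega) (by omega)
      have hsplit : ∑ i ∈ range K, d i = ∑ i ∈ range j, d i + d j := by
        rw [← sum_range_add_sum_Ico d (show j + 1 ≤ K by omega), sum_range_succ, hmid, add_zero]
      simp only [hjK, hkK, if_true, if_false, hsplit]
      linarith [hd.sum_range_nonneg j (by omega)]
    · simpa [hjK, show ¬k < K by omega] using hd.sum_range_nonneg K hK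
  sum_range_eq_zero := by
    simp [sum_range_transfer, hk, hjk.trans hk, hd.sum_range_eq_zero]

end IsBalanced

theorem exists_reflTransGen_eqOn {n : ℕ} {x y : ℕ → ℝ}
    (hy : ∀ i, i + 1 < n → y i < y (i + 1)) (hxy : IsBalanced n (y - x)) :
    ∃ z, Relation.ReflTransGen (SimpleNondegContraction n) x z ∧ ∀ i < n, z i = y i := by
  induction hN : #{i ∈ range n | (y - x) i ≠ 0} using Nat.strong_induction_on
    generalizing x with
  | _ N ih =>
    by_cases hne : ∃ i < n, (y - x) i ≠ 0
    swap
    · push Not at hne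
      exact ⟨x, .refl, fun i hi => (sub_eq_zero.1 (hne i hi)).symm⟩
    obtain ⟨j, k, hjk, hk, hdj, hdk, hzero⟩ := hxy.exists_pos_neg hne
    simp only [Pi.sub_apply] at hdj hdk hzero
    set t := min (y j - x j) (x k - y k)
    have ht : 0 < t := lt_min hdj (by linarith)
    have hstep := reflTransGen_transfer (n := n) hjk hk ht (min_le_left _ _) (min_le_right _ _)
      (fun i hji hik => (sub_eq_zero.1 (hzero i hji hik)).symm) fun i _ hik => hy i (by omega)
    have hbal : IsBalanced n (y - transfer x j k t) := by
      rw [sub_transfer]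
      exact hxy.transfer hjk hk (min_le_left _ _) fun i hji hik => by simp [hzero i hji hik]
    have hfewer : #{i ∈ range n | (y - transfer x j k t) i ≠ 0} < N := by
      rw [← hN, sub_transfer]
      have hzero_of_zero : ∀ i ∈ range n, (y - x) i = 0 → transfer (y - x) k j t i = 0 := by
        intro i _ hi
        have hik : i ≠ k := by rintro rfl; simp only [Pi.sub_apply] at hi; linarith
        have hij : i ≠ j := by rintro rfl; simp only [Pi.sub_apply] at hi; linarith
        rw [transfer_apply_of_ne hik hij, hi]
      rcases min_choice (y j - x j) (x k - y k) with hmin | hmin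
      · exact card_filter_ne_zero_lt hzero_of_zero (mem_range.2 (hjk.trans hk)) hdj.ne'
          (by rw [transfer_apply_right hjk.ne']; simp [t, hmin])
      · exact card_filter_ne_zero_lt hzero_of_zero (mem_range.2 hk) hdk.ne
          (by rw [transfer_apply_left hjk.ne']; simp [t, hmin])
    obtain ⟨z, hz, hzy⟩ := ih _ hfewer hbal rfl
    exact ⟨z, hstep.trans hz, hzy⟩

theorem MajorizedOn.isBalanced_sub {n : ℕ} {x y : ℕ → ℝ} (hmaj : MajorizedOn n y x)
    (hx : MonotoneOn x (Set.Iio n)) : IsBalanced n (y - x) := by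
  have hsum : ∑ i ∈ range n, (y - x) i = 0 := by
    have hle := hmaj id (convexOn_id convex_univ)
    have hge := hmaj (-id) (concaveOn_id convex_univ).neg
    simp only [id, Pi.neg_apply, sum_neg_distrib, neg_le_neg_iff] at hle hge
    simp only [Pi.sub_apply, sum_sub_distrib]
    linarith
  refine ⟨fun K hK => ?_, hsum⟩
  rcases hK.lt_or_eq with hK | rfl
  swap
  · exact hsum.ge
  -- the convex function `(x K - ·)⁺` sees exactly the first `K` entries of `x`
  set a := x K
  have hconv : ConvexOn ℝ Set.univ fun z => max (a - z) 0 :=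
    ((convexOn_const a convex_univ).sub (concaveOn_id convex_univ)).sup
      (convexOn_const 0 convex_univ)
  have hx_lt : ∀ i < K, a - x i = max (a - x i) 0 := fun i hi =>
    (max_eq_left (sub_nonneg.2 (hx (Set.mem_Iio.2 (hi.trans hK)) hK hi.le))).symm
  have hx_ge : ∀ i ∈ Ico K n, max (a - x i) 0 = 0 := fun i hi =>
    max_eq_right (sub_nonpos.2 (hx hK (Set.mem_Iio.2 (mem_Ico.1 hi).2) (mem_Ico.1 hi).1))
  have key : ∑ i ∈ range K, (a - y i) ≤ ∑ i ∈ range K, (a - x i) :=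
    calc ∑ i ∈ range K, (a - y i)
        ≤ ∑ i ∈ range n, max (a - y i) 0 :=
          (sum_le_sum fun i _ => le_max_left _ _).trans
            (sum_le_sum_of_subset_of_nonneg (range_subset_range.2 hK.le)
              fun i _ _ => le_max_right _ _)
      _ ≤ ∑ i ∈ range n, max (a - x i) 0 := hmaj _ hconv
      _ = ∑ i ∈ range K, (a - x i) := by
          rw [← sum_range_add_sum_Ico _ hK.le, sum_eq_zero hx_ge, add_zero]
          exact sum_congr rfl fun i hi => (hx_lt i (mem_range.1 hi)).symm
  simp only [Pi.sub_apply, sum_sub_distrib] at key ⊢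
  linarith

theorem majorized_strict_chain_of_contractions_general
    (n : ℕ) (X Y : ℕ → ℝ)
    (hX : ∀ i, i + 1 < n → X i < X (i + 1))
    (hY : ∀ i, i + 1 < n → Y i < Y (i + 1))
    (hmaj : MajorizedOn n Y X) :
    ∃ (m : ℕ) (c : ℕ → ℕ → ℝ), c 0 = X ∧ (∀ i < n, c m i = Y i) ∧
      (∀ j ≤ m, ∀ i, i + 1 < n → c j i < c j (i + 1)) ∧
      ∀ j < m, SimpleNondegContraction n (c j) (c (j + 1)) := by
  have hXmono : MonotoneOn X (Set.Iio n) :=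
    (strictMonoOn_of_lt_add_one Set.ordConnected_Iio fun i _ _ hi => hX i hi).monotoneOn
  obtain ⟨Z, hXZ, hZY⟩ := exists_reflTransGen_eqOn hY (hmaj.isBalanced_sub hXmono)
  obtain ⟨m, c, rfl, rfl, hc⟩ := hXZ.exists_seq
  refine ⟨m, c, rfl, hZY, fun j hj => ?_, hc⟩
  induction j with
  | zero => exact hX
  | succ j ih => exact (hc j hj).lt_succ (ih (by omega))

/-- Proposition: if `Y ≺ X` are distinct strictly increasing `n`-tuples, then `Y`
is obtained from `X` by finitely many simple nondegenerate contractions, all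
intermediate tuples being strictly increasing. -/
theorem majorized_strict_chain_of_contractions
    (n : ℕ) (X Y : ℕ → ℝ)
    (hX : ∀ i, i + 1 < n → X i < X (i + 1))
    (hY : ∀ i, i + 1 < n → Y i < Y (i + 1))
    (hne : ∃ i < n, X i ≠ Y i)
    (hmaj : MajorizedOn n Y X) :
    ∃ (m : ℕ) (c : ℕ → ℕ → ℝ), c 0 = X ∧ (∀ i < n, c m i = Y i) ∧
      (∀ j ≤ m, ∀ i, i + 1 < n → c j i < c j (i + 1)) ∧
      ∀ j < m, SimpleNondegContraction n (c j) (c (j + 1)) :=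
  majorized_strict_chain_of_contractions_general n X Y hX hY hmaj
end

section
/- Let P be a monic real polynomial of degree n ≥ 2 with n distinct real roots x_1 < x_2 < … < x_n, and let w_1 < … < w_{n−1} be the roots of P′. Then for every λ ∈ ℝ the polynomial P − λP′ has n distinct real roots, which can be labeled x_1(λ) < … < x_n(λ) such that x_j(λ) < w_j < x_{j+1}(λ) for all 1 ≤ j ≤ n−1. -/
/-!
By Rolle's theorem every gap `(x j, x (j + 1))` contains a critical point of `P`; as there are only
`n - 1` critical points, `w j` is the one in the `j`-th gap. Since `P'(w j) = 0`, the pencil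
`Q = P - λ P'` agrees with `P` at `w j`, so `Q (w j)` has the sign `(-1) ^ (n - 1 - j)`. Together
with the signs of the monic `Q` at `±∞`, the intermediate value theorem puts a root of `Q` in each
of the `n` intervals into which the `w j` cut the line, and `n` distinct roots of a monic
polynomial of degree `n` are all of its roots.
-/

open Polynomial Finset Filter Lagrange

lemma Nat.strictMonoOn_Iio_of_lt_succ {α : Type*} [Preorder α] {f : ℕ → α} {n : ℕ}
    (h : ∀ i, i + 1 < n → f i < f (i + 1)) : StrictMonoOn f (Set.Iio n) :=
  (strictMonoOn_Iic_of_lt_succ (n := n - 1) fun m hm => by simpa using h m (by omega)).mono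
    fun i hi => by simp only [Set.mem_Iio, Set.mem_Iic] at *; omega

def Interlaces {α : Type*} [Preorder α] (n : ℕ) (r w : ℕ → α) : Prop :=
  ∀ j, j + 1 < n → r j < w j ∧ w j < r (j + 1)

lemma Interlaces.strictMonoOn {α : Type*} [Preorder α] {n : ℕ} {r w : ℕ → α}
    (h : Interlaces n r w) : StrictMonoOn r (Set.Iio n) :=
  Nat.strictMonoOn_Iio_of_lt_succ fun i hi => (h i hi).1.trans (h i hi).2

namespace Polynomial

lemma Monic.eq_nodal_of_isRoot {R ι : Type*} [CommRing R] [IsDomain R] {Q : R[X]} (hQ : Q.Monic)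
    {s : Finset ι} {r : ι → R} (hdeg : Q.natDegree = #s) (hr : Set.InjOn r s)
    (hroot : ∀ i ∈ s, Q.IsRoot (r i)) : Q = nodal s r := by
  refine eq_of_degree_sub_lt_of_eval_index_eq s hr ?_ fun i hi => ?_
  · have hdeg' : Q.degree = (nodal s r).degree := by
      rw [degree_eq_natDegree hQ.ne_zero, degree_eq_natDegree nodal_ne_zero, hdeg,
        natDegree_nodal]
    calc (Q - nodal s r).degree < Q.degree :=
          degree_sub_lt_left hdeg' hQ.ne_zero (by rw [hQ.leadingCoeff, nodal_monic.leadingCoeff])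
      _ = #s := by rw [degree_eq_natDegree hQ.ne_zero, hdeg]
  · rw [(hroot i hi).eq_zero, eval_nodal_at_node hi]

lemma Monic.degree_C_mul_derivative_lt {R : Type*} [CommRing R] [Nontrivial R] {P : R[X]}
    (hP : P.Monic) (c : R) : (C c * derivative P).degree < P.degree := by
  rw [← smul_eq_C_mul]
  exact (degree_smul_le c _).trans_lt (degree_derivative_lt hP.ne_zero)

lemma Monic.eventually_eval_pos_atTop {Q : ℝ[X]} (hQ : Q.Monic) : ∀ᶠ t in atTop, 0 < Q.eval t :=
  Q.isEquivalent_atTop_lead.eventually_pos <| (eventually_gt_atTop 0).mono fun t ht => by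
    simpa [hQ.leadingCoeff] using pow_pos ht Q.natDegree

lemma Monic.eventually_neg_one_pow_mul_eval_pos_atBot {Q : ℝ[X]} (hQ : Q.Monic) :
    ∀ᶠ t in atBot, 0 < (-1) ^ Q.natDegree * Q.eval t := by
  refine ((Asymptotics.IsEquivalent.refl (u := fun _ => (-1 : ℝ) ^ Q.natDegree)).mul
    Q.isEquivalent_atBot_lead).eventually_pos ?_
  filter_upwards [eventually_lt_atBot 0] with t ht
  simpa [hQ.leadingCoeff, ← mul_pow] using pow_pos (neg_pos.2 ht) Q.natDegree

lemma exists_isRoot_mem_Ioo_of_neg_one_pow_mul_pos (Q : ℝ[X]) {a b : ℝ} (hab : a < b) {k : ℕ}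
    (ha : 0 < (-1) ^ (k + 1) * Q.eval a) (hb : 0 < (-1) ^ k * Q.eval b) :
    ∃ r ∈ Set.Ioo a b, Q.IsRoot r := by
  rcases neg_one_pow_eq_or ℝ k with hk | hk <;> simp only [pow_succ, hk] at ha hb <;>
    norm_num at ha hb
  · exact intermediate_value_Ioo hab.le Q.continuousOn ⟨ha, hb⟩
  · exact intermediate_value_Ioo' hab.le Q.continuousOn ⟨hb, ha⟩

lemma exists_mem_Ioo_of_derivative_eq_C_mul_nodal {ι : Type*} {P : ℝ[X]} {c : ℝ} (hc : c ≠ 0)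
    {s : Finset ι} {w : ι → ℝ} (hP' : derivative P = C c * nodal s w) {a b : ℝ} (hab : a < b)
    (ha : P.IsRoot a) (hb : P.IsRoot b) : ∃ k ∈ s, w k ∈ Set.Ioo a b := by
  obtain ⟨t, ht, hderiv⟩ := exists_deriv_eq_zero hab P.continuousOn (ha.trans hb.symm)
  rw [Polynomial.deriv, hP', eval_mul, eval_C, eval_nodal, mul_eq_zero,
    prod_eq_zero_iff] at hderiv
  obtain ⟨k, hk, htk⟩ := hderiv.resolve_left hc
  exact ⟨k, hk, sub_eq_zero.1 htk ▸ ht⟩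

lemma Monic.exists_interlacing_roots {Q : ℝ[X]} {n : ℕ} {w : ℕ → ℝ} (hQ : Q.Monic)
    (hdeg : Q.natDegree = n) (hw : StrictMonoOn w (Set.Iio (n - 1)))
    (hsign : ∀ j, j + 1 < n → 0 < (-1) ^ (n - 1 - j) * Q.eval (w j)) :
    ∃ r : ℕ → ℝ, Interlaces n r w ∧ ∀ j < n, Q.IsRoot (r j) := by
  suffices ∀ j < n, ∃ r, (0 < j → w (j - 1) < r) ∧ (j + 1 < n → r < w j) ∧ Q.IsRoot r by
    choose! r hlo hhi hroot using this
    exact ⟨r, fun j hj => ⟨hhi j (by omega) hj, by simpa using hlo (j + 1) (by omega) (by omega)⟩,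
      hroot⟩
  intro j hj
  obtain ⟨b, hb_lo, hb_eq, hb_sign⟩ : ∃ b, (0 < j → w (j - 1) < b) ∧ (j + 1 < n → b = w j) ∧
      0 < (-1) ^ (n - 1 - j) * Q.eval b := by
    by_cases hjn : j + 1 < n
    · exact ⟨w j, fun _ => hw (Set.mem_Iio.2 (by omega)) (Set.mem_Iio.2 (by omega)) (by omega),
        fun _ => rfl, hsign j hjn⟩
    · obtain ⟨b, hb_pos, hb_gt⟩ :=
        (hQ.eventually_eval_pos_atTop.and (eventually_gt_atTop (w (j - 1)))).exists
      exact ⟨b, fun _ => hb_gt, fun h => absurd h hjn, by simpa [show n - 1 - j = 0 by omega]⟩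
  obtain ⟨a, hab, ha_eq, ha_sign⟩ : ∃ a, a < b ∧ (0 < j → a = w (j - 1)) ∧
      0 < (-1) ^ (n - 1 - j + 1) * Q.eval a := by
    rcases Nat.eq_zero_or_pos j with rfl | hj0
    · obtain ⟨a, ha_pos, ha_lt⟩ :=
        (hQ.eventually_neg_one_pow_mul_eval_pos_atBot.and (eventually_lt_atBot b)).exists
      refine ⟨a, ha_lt, fun h => absurd h (lt_irrefl 0), ?_⟩
      rwa [show n - 1 - 0 + 1 = Q.natDegree by omega]
    · refine ⟨w (j - 1), hb_lo hj0, fun _ => rfl, ?_⟩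
      simpa [show n - 1 - j + 1 = n - 1 - (j - 1) by omega] using hsign (j - 1) (by omega)
  obtain ⟨r, hr, hroot⟩ := Q.exists_isRoot_mem_Ioo_of_neg_one_pow_mul_pos hab ha_sign hb_sign
  exact ⟨r, fun h => ha_eq h ▸ hr.1, fun h => hb_eq h ▸ hr.2, hroot⟩

end Polynomial

section Interlacing

variable {n : ℕ} {x w : ℕ → ℝ}

lemma interlaces_of_derivative_nodal (hx : StrictMonoOn x (Set.Iio n))
    (hw : StrictMonoOn w (Set.Iio (n - 1)))
    (hP' : derivative (nodal (range n) x) = C (n : ℝ) * nodal (range (n - 1)) w) :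
    Interlaces n x w := by
  have hgap : ∀ i : Fin (n - 1), ∃ k : Fin (n - 1), x i < w k ∧ w k < x (i + 1) := fun i => by
    have hi := i.isLt
    have hxi : x i < x (i + 1) :=
      hx (Set.mem_Iio.2 (by omega)) (Set.mem_Iio.2 (by omega)) (by omega)
    obtain ⟨k, hk, hwk⟩ := exists_mem_Ioo_of_derivative_eq_C_mul_nodal
      (Nat.cast_ne_zero.2 (by omega)) hP' hxi
      (eval_nodal_at_node (mem_range.2 (by omega))) (eval_nodal_at_node (mem_range.2 (by omega)))
    exact ⟨⟨k, mem_range.1 hk⟩, hwk⟩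
  choose K hK using hgap
  have hK_mono : StrictMono K := fun i i' hii' => by
    have hxi : x (i + 1) ≤ x i' :=
      hx.monotoneOn (Set.mem_Iio.2 (by omega)) (Set.mem_Iio.2 (by omega)) hii'
    exact (hw.lt_iff_lt (K i).isLt (K i').isLt).1 ((hK i).2.trans_le hxi |>.trans (hK i').1)
  intro j hj
  simpa [hK_mono.apply_eq] using hK ⟨j, by omega⟩

lemma neg_one_pow_mul_eval_nodal_pos (hx : StrictMonoOn x (Set.Iio n)) {j : ℕ} (hj : j + 1 < n)
    {t : ℝ} (ht : x j < t ∧ t < x (j + 1)) :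
    0 < (-1) ^ (n - 1 - j) * (nodal (range n) x).eval t := by
  rw [eval_nodal, ← prod_range_mul_prod_Ico _ (by omega : j + 1 ≤ n), mul_left_comm,
    show n - 1 - j = #(Ico (j + 1) n) by rw [Nat.card_Ico]; omega, ← prod_neg]
  refine mul_pos (prod_pos fun i hi => ?_) (prod_pos fun i hi => ?_)
  · rw [mem_range] at hi
    exact sub_pos.2 <| (hx.monotoneOn (Set.mem_Iio.2 (by omega)) (Set.mem_Iio.2 (by omega))
      (by omega)).trans_lt ht.1
  · rw [mem_Ico] at hi
    exact neg_pos.2 <| sub_neg.2 <|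
      ht.2.trans_le (hx.monotoneOn (Set.mem_Iio.2 (by omega)) (Set.mem_Iio.2 (by omega)) hi.1)

end Interlacing

theorem pencil_roots_interlace_critical_points_general
    (n : ℕ) (x w : ℕ → ℝ)
    (hx : ∀ i, i + 1 < n → x i < x (i + 1))
    (hw : ∀ j, j + 1 < n - 1 → w j < w (j + 1))
    (P : Polynomial ℝ)
    (hP : P = ∏ i ∈ Finset.range n, (X - C (x i)))
    (hP' : derivative P = C (n : ℝ) * ∏ j ∈ Finset.range (n - 1), (X - C (w j))) :
    ∀ lam : ℝ, ∃ xl : ℕ → ℝ,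
      (∀ i, i + 1 < n → xl i < xl (i + 1)) ∧
      P - C lam * derivative P = ∏ i ∈ Finset.range n, (X - C (xl i)) ∧
      ∀ j, j + 1 < n → xl j < w j ∧ w j < xl (j + 1) := by
  intro lam
  rw [← nodal_eq] at hP hP'
  have hx_mono := Nat.strictMonoOn_Iio_of_lt_succ hx
  have hw_mono := Nat.strictMonoOn_Iio_of_lt_succ hw
  have hPm : P.Monic := hP ▸ nodal_monic
  have hcrit : Interlaces n x w := interlaces_of_derivative_nodal hx_mono hw_mono (hP ▸ hP')
  set Q := P - C lam * derivative P
  have hQ : Q.Monic := hPm.sub_of_left (hPm.degree_C_mul_derivative_lt lam)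
  have hQdeg : Q.natDegree = n := by
    rw [natDegree_eq_of_degree_eq (degree_sub_eq_left_of_degree_lt
      (hPm.degree_C_mul_derivative_lt lam)), hP, natDegree_nodal, card_range]
  have hsign : ∀ j, j + 1 < n → 0 < (-1) ^ (n - 1 - j) * Q.eval (w j) := fun j hj => by
    rw [eval_sub, eval_mul, hP', eval_mul, eval_nodal_at_node (mem_range.2 (by omega)), hP]
    simpa using neg_one_pow_mul_eval_nodal_pos hx_mono hj (hcrit j hj)
  obtain ⟨r, hr, hroot⟩ := hQ.exists_interlacing_roots hQdeg hw_mono hsign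
  refine ⟨r, fun i hi => (hr i hi).1.trans (hr i hi).2, ?_, hr⟩
  exact hQ.eq_nodal_of_isRoot (by rw [hQdeg, card_range]) (hr.strictMonoOn.injOn.mono
    fun i hi => mem_range.1 hi) fun i hi => hroot i (mem_range.1 hi)

/-- Interlacing of the zeros of the pencil `P - λP'` with the critical points of a
strictly hyperbolic polynomial `P`. -/
theorem pencil_roots_interlace_critical_points
    (n : ℕ) (hn : 2 ≤ n) (x w : ℕ → ℝ)
    (hx : ∀ i, i + 1 < n → x i < x (i + 1))
    (hw : ∀ j, j + 1 < n - 1 → w j < w (j + 1))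
    (P : Polynomial ℝ)
    (hP : P = ∏ i ∈ Finset.range n, (X - C (x i)))
    (hP' : derivative P = C (n : ℝ) * ∏ j ∈ Finset.range (n - 1), (X - C (w j))) :
    ∀ lam : ℝ, ∃ xl : ℕ → ℝ,
      (∀ i, i + 1 < n → xl i < xl (i + 1)) ∧
      P - C lam * derivative P = ∏ i ∈ Finset.range n, (X - C (xl i)) ∧
      ∀ j, j + 1 < n → xl j < w j ∧ w j < xl (j + 1) :=
  pencil_roots_interlace_critical_points_general n x w hx hw P hP hP'
end

section
/- Let P be a monic polynomial of degree n ≥ 2 with n distinct real roots, and for λ ∈ ℝ let x(λ) be a root of P − λP′ depending smoothly on λ (via the implicit function theorem). Then dx/dλ = P′(x(λ)) / (P′(x(λ)) − λP″(x(λ))) > 0; i.e., each root of the pencil P − λP′ is a strictly increasing function of λ. -/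
open Polynomial Finset

private lemma deriv_prod_finset {ι : Type*} [DecidableEq ι] (s : Finset ι)
    (f : ι → Polynomial ℝ) :
    derivative (∏ i ∈ s, f i) = ∑ k ∈ s, (∏ i ∈ s.erase k, f i) * derivative (f k) := by
  induction s using Finset.induction_on with
  | empty => simp
  | @insert a s ha ih =>
    rw [Finset.prod_insert ha, derivative_mul, ih, Finset.mul_sum, Finset.sum_insert ha,
      Finset.erase_insert ha]
    congr 1
    · exact mul_comm _ _
    · refine Finset.sum_congr rfl fun k hk => ?_
      rw [Finset.erase_insert_of_ne (by rintro rfl; exact ha hk),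
        Finset.prod_insert (fun h => ha (Finset.mem_of_mem_erase h))]
      ring

private lemma sq_sum_split (s : Finset ℕ) (q : ℕ → ℝ) :
    (∑ k ∈ s, q k) ^ 2 = ∑ k ∈ s, q k ^ 2 + ∑ k ∈ s, ∑ l ∈ s.erase k, q k * q l := by
  rw [sq, Finset.sum_mul_sum, ← Finset.sum_add_distrib]
  refine Finset.sum_congr rfl fun k hk => ?_
  rw [← Finset.add_sum_erase s (fun l => q k * q l) hk]
  ring

private lemma pencil_laguerre (n : ℕ) (hn : 2 ≤ n) (x : ℕ → ℝ)
    (hx : ∀ i < n, ∀ j < n, i ≠ j → x i ≠ x j) (y : ℝ) :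
    0 < ((derivative (∏ i ∈ Finset.range n, (X - C (x i)))).eval y) ^ 2
      - (∏ i ∈ Finset.range n, (X - C (x i))).eval y *
        (derivative (derivative (∏ i ∈ Finset.range n, (X - C (x i))))).eval y := by
  set s := Finset.range n with hs
  have hP' : derivative (∏ i ∈ s, (X - C (x i))) =
      ∑ k ∈ s, ∏ i ∈ s.erase k, (X - C (x i)) := by
    rw [deriv_prod_finset]
    simp
  have hP'' : derivative (derivative (∏ i ∈ s, (X - C (x i)))) =
      ∑ k ∈ s, ∑ l ∈ s.erase k, ∏ i ∈ (s.erase k).erase l, (X - C (x i)) := by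
    rw [hP', derivative_sum]
    refine Finset.sum_congr rfl fun k hk => ?_
    rw [deriv_prod_finset]
    simp
  have evP : (∏ i ∈ s, (X - C (x i))).eval y = ∏ i ∈ s, (y - x i) := by
    simp [eval_prod]
  have evP' : (derivative (∏ i ∈ s, (X - C (x i)))).eval y
      = ∑ k ∈ s, ∏ i ∈ s.erase k, (y - x i) := by
    rw [hP']
    simp [eval_finset_sum, eval_prod]
  have evP'' : (derivative (derivative (∏ i ∈ s, (X - C (x i))))).eval y =
      ∑ k ∈ s, ∑ l ∈ s.erase k, ∏ i ∈ (s.erase k).erase l, (y - x i) := by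
    rw [hP'']
    simp [eval_finset_sum, eval_prod]
  have key : ∀ k ∈ s, ∀ l ∈ s.erase k,
      (∏ i ∈ s, (y - x i)) * ∏ i ∈ (s.erase k).erase l, (y - x i) =
        (∏ i ∈ s.erase k, (y - x i)) * ∏ i ∈ s.erase l, (y - x i) := by
    intro k hk l hl
    have hlk : l ≠ k := Finset.ne_of_mem_erase hl
    have hk' : k ∈ s.erase l := Finset.mem_erase.2 ⟨Ne.symm hlk, hk⟩
    have h1 : ∏ i ∈ s, (y - x i) = (y - x k) * ∏ i ∈ s.erase k, (y - x i) :=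
      (Finset.mul_prod_erase s _ hk).symm
    have h2 : ∏ i ∈ s.erase k, (y - x i)
        = (y - x l) * ∏ i ∈ (s.erase k).erase l, (y - x i) :=
      (Finset.mul_prod_erase _ _ hl).symm
    have h3 : ∏ i ∈ s.erase l, (y - x i)
        = (y - x k) * ∏ i ∈ (s.erase k).erase l, (y - x i) := by
      have hee : (s.erase l).erase k = (s.erase k).erase l := by
        ext i
        simp only [Finset.mem_erase]
        tauto
      rw [← Finset.mul_prod_erase (s.erase l) _ hk', hee]
    rw [h1, h2, h3]; ring
  have hPP'' : (∏ i ∈ s, (y - x i)) *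
      (∑ k ∈ s, ∑ l ∈ s.erase k, ∏ i ∈ (s.erase k).erase l, (y - x i))
      = ∑ k ∈ s, ∑ l ∈ s.erase k,
          (∏ i ∈ s.erase k, (y - x i)) * ∏ i ∈ s.erase l, (y - x i) := by
    rw [Finset.mul_sum]
    refine Finset.sum_congr rfl fun k hk => ?_
    rw [Finset.mul_sum]
    exact Finset.sum_congr rfl fun l hl => key k hk l hl
  have hpos : 0 < ∑ k ∈ s, (∏ i ∈ s.erase k, (y - x i)) ^ 2 := by
    have hnonneg : ∀ k ∈ s, (0:ℝ) ≤ (∏ i ∈ s.erase k, (y - x i)) ^ 2 :=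
      fun k _ => sq_nonneg _
    have hex : ∃ k ∈ s, 0 < (∏ i ∈ s.erase k, (y - x i)) ^ 2 := by
      by_cases hy : ∃ j ∈ s, y = x j
      · obtain ⟨j, hj, rfl⟩ := hy
        refine ⟨j, hj, ?_⟩
        have hne : (∏ i ∈ s.erase j, (x j - x i)) ≠ 0 := by
          refine Finset.prod_ne_zero_iff.2 fun i hi => ?_
          have hij : i ≠ j := Finset.ne_of_mem_erase hi
          have his : i ∈ s := Finset.mem_of_mem_erase hi
          have := hx j (Finset.mem_range.1 hj) i (Finset.mem_range.1 his) (Ne.symm hij)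
          intro h; exact this (by linarith)
        positivity
      · push_neg at hy
        have h0 : (0:ℕ) ∈ s := Finset.mem_range.2 (by omega)
        refine ⟨0, h0, ?_⟩
        have hne : (∏ i ∈ s.erase 0, (y - x i)) ≠ 0 := by
          refine Finset.prod_ne_zero_iff.2 fun i hi => ?_
          have his : i ∈ s := Finset.mem_of_mem_erase hi
          have := hy i his
          intro h; exact this (by linarith)
        positivity
    exact Finset.sum_pos' hnonneg hex
  rw [evP, evP', evP'', hPP'']
  have hsq := sq_sum_split s (fun k => ∏ i ∈ s.erase k, (y - x i))
  linarith [hpos]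

/-- Each root of the pencil `P - λP'` of a strictly hyperbolic polynomial, viewed as a
smooth function of `λ`, has derivative `P'(x(λ)) / (P'(x(λ)) - λ P''(x(λ))) > 0`. -/
theorem pencil_root_strictly_increasing
    (n : ℕ) (hn : 2 ≤ n) (x : ℕ → ℝ)
    (hx : ∀ i < n, ∀ j < n, i ≠ j → x i ≠ x j)
    (P : Polynomial ℝ)
    (hP : P = ∏ i ∈ Finset.range n, (X - C (x i)))
    (r r' : ℝ → ℝ)
    (hr : ∀ lam : ℝ, HasDerivAt r (r' lam) lam)
    (hroot : ∀ lam : ℝ, (P - C lam * derivative P).eval (r lam) = 0) :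
    ∀ lam : ℝ,
      r' lam = (derivative P).eval (r lam) /
        ((derivative P).eval (r lam) - lam * (derivative (derivative P)).eval (r lam)) ∧
      0 < r' lam := by
  intro lam
  set A := (derivative P).eval (r lam) with hA
  set B := (derivative (derivative P)).eval (r lam) with hB
  have hPr : P.eval (r lam) = lam * A := by
    have := hroot lam
    simp only [eval_sub, eval_mul, eval_C] at this
    linarith
  have hlag : 0 < A ^ 2 - P.eval (r lam) * B := by
    have := pencil_laguerre n hn x hx (r lam)
    rw [← hP] at this
    exact this
  have hAD : 0 < A * (A - lam * B) := by
    rw [hPr] at hlag; nlinarith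
  have hD : A - lam * B ≠ 0 := by
    intro h; rw [h, mul_zero] at hAD; exact lt_irrefl 0 hAD
  have h1 : HasDerivAt (fun t => P.eval (r t)) (A * r' lam) lam :=
    (P.hasDerivAt (r lam)).comp lam (hr lam)
  have h2 : HasDerivAt (fun t => (derivative P).eval (r t)) (B * r' lam) lam :=
    ((derivative P).hasDerivAt (r lam)).comp lam (hr lam)
  have h3 : HasDerivAt (fun t : ℝ => t) 1 lam := hasDerivAt_id lam
  have h4 : HasDerivAt (fun t => P.eval (r t) - t * (derivative P).eval (r t))
      (A * r' lam - (1 * A + lam * (B * r' lam))) lam := h1.sub (h3.mul h2)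
  have h5 : (fun t => P.eval (r t) - t * (derivative P).eval (r t)) = fun _ => (0:ℝ) := by
    funext t
    have := hroot t
    simp only [eval_sub, eval_mul, eval_C] at this
    linarith
  have h6 : A * r' lam - (1 * A + lam * (B * r' lam)) = 0 := by
    rw [h5] at h4
    exact h4.unique (hasDerivAt_const lam 0)
  have h7 : r' lam * (A - lam * B) = A := by linear_combination h6
  have hr' : r' lam = A / (A - lam * B) := (eq_div_iff hD).2 h7
  refine ⟨hr', ?_⟩
  rw [hr']
  rcases mul_pos_iff.1 hAD with ⟨h₁, h₂⟩ | ⟨h₁, h₂⟩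
  · exact div_pos h₁ h₂
  · exact div_pos_iff.2 (Or.inr ⟨h₁, h₂⟩)
end

section
/- Let P be a monic polynomial of degree n ≥ 2 with n distinct real roots, with pencil P_λ = P − λP′ having roots x_1(λ) < … < x_n(λ) and P_λ′ = P′ − λP″ having roots w_1(λ) < … < w_{n−1}(λ). Then for every 1 ≤ j ≤ n−1, every 1 ≤ m ≤ n−1, and every λ ∈ ℝ: ∑_{i=1}^m 1/(x_i(λ) − w_j(λ)) < 0. -/
open Polynomial Finset

private lemma mono_lt_aux (f : ℕ → ℝ) (N : ℕ) (h : ∀ i, i + 1 < N → f i < f (i + 1)) :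
    ∀ i i', i < i' → i' < N → f i < f i' := by
  intro i i' hlt hN
  induction i' with
  | zero => omega
  | succ a ih =>
    rcases Nat.lt_succ_iff_lt_or_eq.mp hlt with h1 | h1
    · exact (ih h1 (by omega)).trans (h a hN)
    · subst h1; exact h i hN

private lemma smono_add_aux (k : ℕ → ℕ) (N : ℕ) (hk : ∀ a b, a < b → b < N → k a < k b) :
    ∀ j d, j + d < N → k j + d ≤ k (j + d) := by
  intro j d
  induction d with
  | zero => simp
  | succ c ih =>
    intro h
    have h1 := ih (by omega)
    have h2 := hk (j + c) (j + c + 1) (by omega) (by omega)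
    have h3 : k (j + (c + 1)) = k (j + c + 1) := rfl
    omega

/-- For a strictly hyperbolic monic `P` of degree `n ≥ 2`, with `x i` the ordered roots of
`P - λP'` and `w j` the ordered roots of `P' - λP''`, all partial sums
`∑_{i<m} 1/(x i - w j)` are negative (for `1 ≤ m ≤ n-1`). -/
theorem partial_sums_reciprocals_neg
    (n : ℕ) (hn : 2 ≤ n) (x : ℕ → ℝ)
    (hx : ∀ i, i + 1 < n → x i < x (i + 1))
    (P : Polynomial ℝ)
    (hP : P = ∏ i ∈ Finset.range n, (X - C (x i)))
    (lam : ℝ) (xx ww : ℕ → ℝ)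
    (hxx : ∀ i, i + 1 < n → xx i < xx (i + 1))
    (hww : ∀ j, j + 1 < n - 1 → ww j < ww (j + 1))
    (hPl : P - C lam * derivative P = ∏ i ∈ Finset.range n, (X - C (xx i)))
    (hPl' : derivative P - C lam * derivative (derivative P) =
      C (n : ℝ) * ∏ j ∈ Finset.range (n - 1), (X - C (ww j))) :
    ∀ j < n - 1, ∀ m, 1 ≤ m → m ≤ n - 1 →
      ∑ i ∈ Finset.range m, 1 / (xx i - ww j) < 0 := by
  have xmono : ∀ a b, a < b → b < n → xx a < xx b := mono_lt_aux xx n hxx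
  have wmono : ∀ a b, a < b → b < n - 1 → ww a < ww b := mono_lt_aux ww (n - 1) hww
  set Q : Polynomial ℝ := ∏ i ∈ Finset.range n, (X - C (xx i)) with hQdef
  have hQ' : derivative Q = C (n : ℝ) * ∏ j ∈ Finset.range (n - 1), (X - C (ww j)) := by
    calc derivative Q = derivative (P - C lam * derivative P) := by rw [hPl]
      _ = derivative P - C lam * derivative (derivative P) := by
          rw [derivative_sub, derivative_mul, derivative_C, zero_mul, zero_add]
      _ = _ := hPl'
  have hQeval : ∀ t, Q.eval t = ∏ i ∈ Finset.range n, (t - xx i) := by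
    intro t; simp [hQdef, eval_prod]
  have hQ'eval : ∀ t, (derivative Q).eval t = (n : ℝ) * ∏ k ∈ Finset.range (n - 1), (t - ww k) := by
    intro t; rw [hQ']; simp [eval_prod]
  have hroot : ∀ i < n, Q.eval (xx i) = 0 := by
    intro i hi
    rw [hQeval]
    exact Finset.prod_eq_zero (Finset.mem_range.mpr hi) (sub_self _)
  have rolle : ∀ i, i + 1 < n →
      ∃ c, c ∈ Set.Ioo (xx i) (xx (i + 1)) ∧ (derivative Q).eval c = 0 := by
    intro i hi
    obtain ⟨c, hc, hc0⟩ := exists_deriv_eq_zero (f := fun t => Q.eval t) (hxx i hi)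
      ((Polynomial.continuous Q).continuousOn)
      (by show Q.eval (xx i) = Q.eval (xx (i + 1)); rw [hroot i (by omega), hroot (i + 1) hi])
    refine ⟨c, hc, ?_⟩
    rw [← Polynomial.deriv]; exact hc0
  have idroot : ∀ c : ℝ, (derivative Q).eval c = 0 → ∃ k < n - 1, c = ww k := by
    intro c hc
    rw [hQ'eval] at hc
    have hn0 : (n : ℝ) ≠ 0 := Nat.cast_ne_zero.mpr (by omega)
    rcases mul_eq_zero.mp hc with h | h
    · exact absurd h hn0
    · obtain ⟨k, hk, hk0⟩ := Finset.prod_eq_zero_iff.mp h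
      exact ⟨k, Finset.mem_range.mp hk, by linarith [sub_eq_zero.mp hk0]⟩
  choose! c hc1 hc2 using rolle
  choose! k hk1 hk2 using fun i hi => idroot (c i) (hc2 i hi)
  have kmono : ∀ a b, a < b → b < n - 1 → k a < k b := by
    intro a b hab hb
    have ha' : a + 1 < n := by omega
    have hb' : b + 1 < n := by omega
    by_contra hle
    push_neg at hle
    have h1 : ww (k b) ≤ ww (k a) := by
      rcases Nat.lt_or_ge (k b) (k a) with h | h
      · exact le_of_lt (wmono _ _ h (hk1 a ha'))
      · have : k a = k b := by omega
        rw [this]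
    have h2 : c a < c b := by
      have hx1 : xx (a + 1) ≤ xx b := by
        rcases Nat.lt_or_ge (a + 1) b with h | h
        · exact le_of_lt (xmono _ _ h (by omega))
        · have : a + 1 = b := by omega
          rw [this]
      have := (hc1 a ha').2
      have := (hc1 b hb').1
      linarith
    rw [hk2 a ha', hk2 b hb'] at h2
    linarith
  have hkid : ∀ i, i + 1 < n → k i = i := by
    have hlb : ∀ i, i + 1 < n → i ≤ k i := by
      intro i
      induction i with
      | zero => intro _; exact Nat.zero_le _
      | succ a ih =>
        intro h
        have h1 := kmono a (a + 1) (by omega) (by omega)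
        have h2 := ih (by omega)
        omega
    intro i hi
    have hub : k i ≤ i := by
      have h1 := smono_add_aux k (n - 1) kmono i (n - 2 - i) (by omega)
      have h2 : i + (n - 2 - i) = n - 2 := by omega
      rw [h2] at h1
      have h3 := hk1 (n - 2) (by omega)
      omega
    exact le_antisymm hub (hlb i hi)
  have hintl : ∀ i, i + 1 < n → xx i < ww i ∧ ww i < xx (i + 1) := by
    intro i hi
    have hcw : c i = ww i := by rw [hk2 i hi, hkid i hi]
    exact ⟨hcw ▸ (hc1 i hi).1, hcw ▸ (hc1 i hi).2⟩
  intro j hj m hm1 hm2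
  have hj' : j + 1 < n := by omega
  have hlt1 : ∀ i ≤ j, xx i < ww j := by
    intro i hi
    have : xx i ≤ xx j := by
      rcases Nat.lt_or_ge i j with h | h
      · exact le_of_lt (xmono _ _ h (by omega))
      · have : i = j := by omega
        rw [this]
    linarith [(hintl j hj').1]
  have hlt2 : ∀ i, j < i → i < n → ww j < xx i := by
    intro i hi hi'
    have : xx (j + 1) ≤ xx i := by
      rcases Nat.lt_or_ge (j + 1) i with h | h
      · exact le_of_lt (xmono _ _ h hi')
      · have : j + 1 = i := by omega
        rw [this]
    linarith [(hintl j hj').2]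
  have hne : ∀ i < n, ww j - xx i ≠ 0 := by
    intro i hi
    rcases Nat.lt_or_ge j i with h | h
    · have := hlt2 i h hi; linarith
    · have := hlt1 i h; linarith
  have hQne : Q.eval (ww j) ≠ 0 := by
    rw [hQeval]
    exact Finset.prod_ne_zero_iff.mpr fun i hi => hne i (Finset.mem_range.mp hi)
  have hd : (derivative Q).eval (ww j) = 0 := by
    have hz : ∏ kk ∈ Finset.range (n - 1), (ww j - ww kk) = 0 :=
      Finset.prod_eq_zero (Finset.mem_range.mpr hj) (sub_self _)
    rw [hQ'eval, hz, mul_zero]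
  have hQ'e2 : (derivative Q).eval (ww j) =
      ∑ i ∈ Finset.range n, ∏ kk ∈ (Finset.range n).erase i, (ww j - xx kk) := by
    have hdp : derivative Q =
        ∑ i ∈ Finset.range n, ∏ kk ∈ (Finset.range n).erase i, (X - C (xx kk)) := by
      have hdp0 : derivative (∏ i ∈ Finset.range n, (X - C (xx i))) =
          ∑ i ∈ Finset.range n,
            (∏ kk ∈ (Finset.range n).erase i, (X - C (xx kk))) * derivative (X - C (xx i)) :=
        Polynomial.derivative_prod
      rw [hQdef, hdp0]
      refine Finset.sum_congr rfl fun i _ => ?_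
      simp
    rw [hdp]
    simp [eval_finset_sum, eval_prod]
  have hsum0 : ∑ i ∈ Finset.range n, 1 / (ww j - xx i) = 0 := by
    have key : (∑ i ∈ Finset.range n, 1 / (ww j - xx i)) * Q.eval (ww j)
        = (derivative Q).eval (ww j) := by
      rw [hQeval, hQ'e2, Finset.sum_mul]
      refine Finset.sum_congr rfl fun i hi => ?_
      have hnei := hne i (Finset.mem_range.mp hi)
      rw [← Finset.mul_prod_erase (Finset.range n) _ hi, one_div,
        inv_mul_cancel_left₀ hnei]
    rw [hd] at key
    exact (mul_eq_zero.mp key).resolve_right hQne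
  rcases le_or_gt m (j + 1) with hcase | hcase
  · refine Finset.sum_neg (fun i hi => ?_) ⟨0, Finset.mem_range.mpr (by omega)⟩
    have hi' : i ≤ j := by
      have := Finset.mem_range.mp hi; omega
    have := hlt1 i hi'
    exact one_div_neg.mpr (by linarith)
  · have hsum0' : ∑ i ∈ Finset.range n, 1 / (xx i - ww j) = 0 := by
      have heq : ∀ i : ℕ, 1 / (xx i - ww j) = -(1 / (ww j - xx i)) := by
        intro i
        rw [← neg_sub (ww j) (xx i), one_div_neg_eq_neg_one_div]
      calc ∑ i ∈ Finset.range n, 1 / (xx i - ww j)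
          = -∑ i ∈ Finset.range n, 1 / (ww j - xx i) := by
            rw [← Finset.sum_neg_distrib]
            exact Finset.sum_congr rfl fun i _ => heq i
        _ = 0 := by rw [hsum0, neg_zero]
    have hmn : m ≤ n := by omega
    have hsplit := Finset.sum_range_add_sum_Ico (fun i => 1 / (xx i - ww j)) hmn
    have hpos : 0 < ∑ i ∈ Finset.Ico m n, 1 / (xx i - ww j) := by
      refine Finset.sum_pos (fun i hi => ?_) (Finset.nonempty_Ico.mpr (by omega))
      obtain ⟨h1, h2⟩ := Finset.mem_Ico.mp hi
      have := hlt2 i (by omega) h2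
      exact one_div_pos.mpr (by linarith)
    linarith
end

section
/- Let P be a monic hyperbolic polynomial of degree n ≥ 2 (all roots real), and for λ ∈ ℝ write the roots of P − λP′ in nondecreasing order x_1(λ) ≤ … ≤ x_n(λ). For 1 ≤ m ≤ n−1 define f_m(λ) = ∑_{i=1}^m (x_i(λ) − λ). Then each f_m is nondecreasing on (−∞, 0] and nonincreasing on [0, ∞); moreover f_n(λ) = ∑_{i=1}^n x_i(0) is constant in λ. -/
/-!
For `P = ∏ (X - xᵢ)` the polynomial `P - λP'` is the characteristic polynomial of the symmetric
matrix `A(λ) = diag(x) + λ·𝟙𝟙ᵀ`, so `x₁(λ) ≤ … ≤ xₙ(λ)` are its eigenvalues. By Ky Fan's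
principle, `g_m(λ) = x₁(λ) + … + x_m(λ)` is the minimum of `∑ⱼ ⟪uⱼ, A(λ) uⱼ⟫` over orthonormal
`m`-frames `u`; each of these sums is affine in `λ` with slope `∑ⱼ ⟪uⱼ, 𝟙⟫²`, so `g_m` is concave,
and so is `f_m(λ) = g_m(λ) - mλ`. Testing with the standard basis vectors belonging to the `m`
smallest `xᵢ` gives `g_m(λ) ≤ g_m(0) + mλ`, i.e. `f_m ≤ f_m(0)`, and a concave function that is
maximal at `0` increases before `0` and decreases after it. Finally `g_n(λ) = tr A(λ) = ∑ xᵢ + nλ`.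
-/

open Polynomial Finset Matrix
open scoped RealInnerProductSpace

theorem Polynomial.roots_prod_X_sub_C_eq_map {R ι : Type*} [CommRing R] [IsDomain R]
    (s : Finset ι) (f : ι → R) : (∏ i ∈ s, (X - C (f i))).roots = s.val.map f := by
  rw [← roots_multiset_prod_X_sub_C (s.val.map f), Multiset.map_map]
  rfl

theorem Matrix.trace_eq_sum_of_charpoly_eq_prod {R ι κ : Type*} [CommRing R] [IsDomain R]
    [Fintype κ] [DecidableEq κ] {A : Matrix κ κ R} {s : Finset ι} {f : ι → R}
    (h : A.charpoly = ∏ i ∈ s, (X - C (f i))) : A.trace = ∑ i ∈ s, f i := by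
  rw [trace_eq_sum_roots_charpoly_of_splits (h ▸ Splits.prod fun i _ => Splits.X_sub_C (f i)), h,
    roots_prod_X_sub_C_eq_map, sum_map_val]

theorem Fin.univ_val_map_eq_range_val_map {M : Type*} (n : ℕ) (s : ℕ → M) :
    univ.val.map (fun k : Fin n => s k) = (range n).val.map s := by
  rw [← Nat.Iio_eq_range, ← Fin.map_valEmbedding_univ, map_val, Multiset.map_map]
  rfl

theorem sum_range_le_sum_mul_of_map_eq {ι : Type*} [Fintype ι] {n m : ℕ} {s : ℕ → ℝ}
    {μ q : ι → ℝ} (hs : MonotoneOn s (Set.Iio n)) (hμ : univ.val.map μ = (range n).val.map s)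
    (hmn : m ≤ n) (hq0 : ∀ k, 0 ≤ q k) (hq1 : ∀ k, q k ≤ 1) (hqm : ∑ k, q k = m) :
    ∑ i ∈ range m, s i ≤ ∑ k, μ k * q k := by
  -- `c` is the `m`-th smallest value; `∑ min (· - c) 0` only sees the multiset of values.
  set c := s (m - 1)
  have hle : ∀ i j, i ≤ j → j < n → s i ≤ s j := fun i j hij hj =>
    hs (show i < n by omega) hj hij
  have hmin : ∑ i ∈ range m, (s i - c) = ∑ i ∈ range n, min (s i - c) 0 := by
    rw [← sum_subset (range_subset_range.2 hmn)]
    · refine sum_congr rfl fun i hi => (min_eq_left ?_).symm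
      have := mem_range.1 hi
      linarith [hle i (m - 1) (by omega) (by omega)]
    · intro i hi hmi
      simp only [mem_range] at hi hmi
      exact min_eq_right (by linarith [hle (m - 1) i (by omega) hi])
  have hperm : ∑ i ∈ range n, min (s i - c) 0 = ∑ k, min (μ k - c) 0 := by
    simpa only [Multiset.map_map, Function.comp_def, sum_map_val] using
      congrArg (fun M => (M.map fun y => min (y - c) 0).sum) hμ.symm
  have hweight : ∀ k, min (μ k - c) 0 ≤ (μ k - c) * q k := by
    intro k
    rcases le_total c (μ k) with h | h
    · rw [min_eq_right (by linarith)]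
      nlinarith [hq0 k]
    · rw [min_eq_left (by linarith)]
      nlinarith [hq1 k]
  calc ∑ i ∈ range m, s i = ∑ i ∈ range m, (s i - c) + m * c := by
        simp [sum_sub_distrib]
    _ ≤ ∑ k, (μ k - c) * q k + m * c := by
        rw [hmin, hperm]
        gcongr with k
        exact hweight k
    _ = ∑ k, μ k * q k := by
        simp only [sub_mul, sum_sub_distrib, ← mul_sum, hqm]
        ring

theorem exists_injective_sum_eq_sum_range_of_map_eq {n m : ℕ} {s : ℕ → ℝ} {μ : Fin n → ℝ}
    (hs : MonotoneOn s (Set.Iio n)) (hμ : univ.val.map μ = (range n).val.map s) (hmn : m ≤ n) :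
    ∃ φ : Fin m → Fin n, Function.Injective φ ∧ ∑ j, μ (φ j) = ∑ i ∈ range m, s i := by
  have hsort : μ ∘ Tuple.sort μ = fun k : Fin n => s k := by
    refine List.ofFn_injective <| List.Perm.eq_of_sortedLE (Tuple.monotone_sort μ).sortedLE_ofFn
      (Monotone.sortedLE_ofFn fun a b hab => hs a.2 b.2 hab) ?_
    rw [← Multiset.coe_eq_coe, ← Fin.univ_val_map, ← Fin.univ_val_map,
      Fin.univ_val_map_eq_range_val_map, ← hμ, Fin.univ_val_map, Fin.univ_val_map]
    exact Multiset.coe_eq_coe.2 ((Tuple.sort μ).ofFn_comp_perm μ)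
  refine ⟨Tuple.sort μ ∘ Fin.castLE hmn,
    (Tuple.sort μ).injective.comp (Fin.castLE_injective hmn), ?_⟩
  rw [← Fin.sum_univ_eq_sum_range]
  exact sum_congr rfl fun j _ => congrFun hsort (Fin.castLE hmn j)

section KyFan

variable {ι E : Type*} [Fintype ι] [NormedAddCommGroup E] [InnerProductSpace ℝ E]
  {T : E →ₗ[ℝ] E} {W : OrthonormalBasis ι ℝ E} {μ : ι → ℝ}

theorem inner_apply_eq_sum_of_eigenbasis (hW : ∀ k, T (W k) = μ k • W k) (v : E) :
    ⟪v, T v⟫ = ∑ k, μ k * ⟪W k, v⟫ ^ 2 := by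
  have hTv : T v = ∑ k, (⟪W k, v⟫ * μ k) • W k := by
    conv_lhs => rw [← W.sum_repr' v]
    simp [hW, smul_smul]
  rw [hTv, inner_sum]
  refine sum_congr rfl fun k _ => ?_
  rw [real_inner_smul_right, real_inner_comm]
  ring

-- Ky Fan: the weights `∑ⱼ ⟪W k, u j⟫²` of the eigenvalues lie in `[0, 1]` and add up to `m`.
theorem sum_range_le_sum_inner_apply (hW : ∀ k, T (W k) = μ k • W k) {n m : ℕ} {s : ℕ → ℝ}
    (hs : MonotoneOn s (Set.Iio n)) (hμ : univ.val.map μ = (range n).val.map s) (hmn : m ≤ n)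
    {u : Fin m → E} (hu : Orthonormal ℝ u) :
    ∑ i ∈ range m, s i ≤ ∑ j, ⟪u j, T (u j)⟫ := by
  have hq1 : ∀ k, ∑ j, ⟪W k, u j⟫ ^ 2 ≤ 1 := fun k => by
    simpa [real_inner_comm, W.orthonormal.1 k] using
      hu.sum_inner_products_le (x := W k) (s := univ)
  have hqm : ∑ k, ∑ j, ⟪W k, u j⟫ ^ 2 = m := by
    simp [sum_comm (γ := ι), W.sum_sq_inner_right, hu.1]
  calc ∑ i ∈ range m, s i ≤ ∑ k, μ k * ∑ j, ⟪W k, u j⟫ ^ 2 :=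
        sum_range_le_sum_mul_of_map_eq hs hμ hmn (fun k => by positivity) hq1 hqm
    _ = ∑ j, ⟪u j, T (u j)⟫ := by
        simp_rw [inner_apply_eq_sum_of_eigenbasis hW, mul_sum]
        exact sum_comm

end KyFan

namespace Matrix.IsHermitian

variable {ι : Type*} [Fintype ι] [DecidableEq ι] {A : Matrix ι ι ℝ} {n m : ℕ} {s : ℕ → ℝ}

theorem toEuclideanLin_eigenvectorBasis (hA : A.IsHermitian) (k : ι) :
    toEuclideanLin A (hA.eigenvectorBasis k) = hA.eigenvalues k • hA.eigenvectorBasis k := by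
  rw [toLpLin_apply, hA.mulVec_eigenvectorBasis]
  rfl

theorem map_eigenvalues_eq_of_charpoly_eq (hA : A.IsHermitian)
    (h : A.charpoly = ∏ i ∈ range n, (X - C (s i))) :
    univ.val.map hA.eigenvalues = (range n).val.map s := by
  simpa [hA.roots_charpoly_eq_eigenvalues, roots_prod_X_sub_C_eq_map] using congrArg roots h

theorem sum_range_le_sum_inner (hA : A.IsHermitian) (hs : MonotoneOn s (Set.Iio n))
    (h : A.charpoly = ∏ i ∈ range n, (X - C (s i))) (hmn : m ≤ n)
    {u : Fin m → EuclideanSpace ℝ ι} (hu : Orthonormal ℝ u) :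
    ∑ i ∈ range m, s i ≤ ∑ j, ⟪u j, toEuclideanLin A (u j)⟫ :=
  sum_range_le_sum_inner_apply hA.toEuclideanLin_eigenvectorBasis hs
    (hA.map_eigenvalues_eq_of_charpoly_eq h) hmn hu

end Matrix.IsHermitian

theorem Matrix.IsHermitian.exists_orthonormal_sum_inner_eq {n m : ℕ} {s : ℕ → ℝ}
    {A : Matrix (Fin n) (Fin n) ℝ} (hA : A.IsHermitian) (hs : MonotoneOn s (Set.Iio n))
    (h : A.charpoly = ∏ i ∈ range n, (X - C (s i))) (hmn : m ≤ n) :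
    ∃ u : Fin m → EuclideanSpace ℝ (Fin n), Orthonormal ℝ u ∧
      ∑ j, ⟪u j, toEuclideanLin A (u j)⟫ = ∑ i ∈ range m, s i := by
  obtain ⟨φ, hφ, hsum⟩ := exists_injective_sum_eq_sum_range_of_map_eq hs
    (hA.map_eigenvalues_eq_of_charpoly_eq h) hmn
  refine ⟨hA.eigenvectorBasis ∘ φ, hA.eigenvectorBasis.orthonormal.comp φ hφ, ?_⟩
  rw [← hsum]
  refine sum_congr rfl fun j _ => ?_
  simp [hA.toEuclideanLin_eigenvectorBasis, real_inner_smul_right,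
    hA.eigenvectorBasis.orthonormal.1]

section Pencil

variable {ι : Type*} [DecidableEq ι]

noncomputable def pencilMatrix (x : ι → ℝ) (c : ℝ) : Matrix ι ι ℝ :=
  diagonal x + c • vecMulVec 1 1

theorem pencilMatrix_isHermitian (x : ι → ℝ) (c : ℝ) : (pencilMatrix x c).IsHermitian := by
  ext i j
  by_cases h : i = j <;> simp [pencilMatrix, h, Ne.symm]

theorem pencilMatrix_zero (x : ι → ℝ) : pencilMatrix x 0 = diagonal x := by
  simp [pencilMatrix]

variable [Fintype ι]

theorem trace_pencilMatrix (x : ι → ℝ) (c : ℝ) :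
    (pencilMatrix x c).trace = ∑ i, x i + Fintype.card ι * c := by
  simp [pencilMatrix, trace, sum_add_distrib, mul_comm]

theorem inner_toEuclideanLin_pencilMatrix (x : ι → ℝ) (c : ℝ) (v : EuclideanSpace ℝ ι) :
    ⟪v, toEuclideanLin (pencilMatrix x c) v⟫ = ∑ i, x i * v i ^ 2 + c * (∑ i, v i) ^ 2 := by
  simp [pencilMatrix, toLpLin_apply, PiLp.inner_apply, mulVec, dotProduct, add_mul,
    sum_add_distrib, sq, mul_sum, sum_mul, diagonal_apply]
  ring_nf

theorem eval_sub_C_mul_derivative_prod (x : ι → ℝ) (c t : ℝ) (ht : ∀ i, t ≠ x i) :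
    eval t (∏ i, (X - C (x i)) - C c * derivative (∏ i, (X - C (x i)))) =
      (∏ i, (t - x i)) * (1 - c * ∑ i, (t - x i)⁻¹) := by
  simp only [derivative_prod_finset, eval_sub, eval_mul, eval_C, eval_prod, eval_finsetSum,
    eval_X, derivative_sub, derivative_X, derivative_C, sub_zero, mul_one, mul_sub, mul_sum]
  congr 1
  refine sum_congr rfl fun i _ => ?_
  rw [← mul_prod_erase univ _ (mem_univ i)]
  field_simp [sub_ne_zero.2 (ht i)]

theorem det_scalar_sub_pencilMatrix (x : ι → ℝ) (c t : ℝ) (ht : ∀ i, t ≠ x i) :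
    (scalar ι t - pencilMatrix x c).det = (∏ i, (t - x i)) * (1 - c * ∑ i, (t - x i)⁻¹) := by
  have hsplit : scalar ι t - pencilMatrix x c = diagonal (fun i => t - x i) *
      (1 + replicateCol Unit (fun i => -c / (t - x i)) * replicateRow Unit (1 : ι → ℝ)) := by
    ext i j
    have := sub_ne_zero.2 (ht i)
    rw [diagonal_mul]
    rcases eq_or_ne i j with rfl | h
    · simp [pencilMatrix, mul_apply]
      field_simp
      ring
    · simp [pencilMatrix, h, mul_apply]
      field_simp
  rw [hsplit, det_mul, det_diagonal, det_one_add_replicateCol_mul_replicateRow]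
  simp [dotProduct, div_eq_mul_inv, mul_sum, sub_eq_add_neg]

theorem charpoly_pencilMatrix (x : ι → ℝ) (c : ℝ) :
    (pencilMatrix x c).charpoly =
      ∏ i, (X - C (x i)) - C c * derivative (∏ i, (X - C (x i))) := by
  refine eq_of_infinite_eval_eq _ _ ((Set.finite_range x).infinite_compl.mono fun t ht => ?_)
  have ht : ∀ i, t ≠ x i := fun i h => ht ⟨i, h.symm⟩
  rw [Set.mem_ofPred_eq, eval_charpoly, det_scalar_sub_pencilMatrix x c t ht,
    eval_sub_C_mul_derivative_prod x c t ht]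

end Pencil

section PencilRoots

variable {n m : ℕ} (x : Fin n → ℝ) {s : ℝ → ℕ → ℝ}

theorem exists_supergradient_sum_range_pencilRoots (hs : ∀ t, MonotoneOn (s t) (Set.Iio n))
    (hcp : ∀ t, (pencilMatrix x t).charpoly = ∏ i ∈ range n, (X - C (s t i))) (hmn : m ≤ n)
    (c : ℝ) : ∃ S, ∀ t, ∑ i ∈ range m, s t i ≤ ∑ i ∈ range m, s c i + (t - c) * S := by
  obtain ⟨u, hu, hc⟩ :=
    (pencilMatrix_isHermitian x c).exists_orthonormal_sum_inner_eq (hs c) (hcp c) hmn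
  refine ⟨∑ j, (∑ i, u j i) ^ 2, fun t => ?_⟩
  calc ∑ i ∈ range m, s t i ≤ ∑ j, ⟪u j, toEuclideanLin (pencilMatrix x t) (u j)⟫ :=
        (pencilMatrix_isHermitian x t).sum_range_le_sum_inner (hs t) (hcp t) hmn hu
    _ = ∑ j, ⟪u j, toEuclideanLin (pencilMatrix x c) (u j)⟫ +
          (t - c) * ∑ j, (∑ i, u j i) ^ 2 := by
        simp only [inner_toEuclideanLin_pencilMatrix, mul_sum, ← sum_add_distrib]
        exact sum_congr rfl fun j _ => by ring
    _ = ∑ i ∈ range m, s c i + (t - c) * ∑ j, (∑ i, u j i) ^ 2 := by rw [hc]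

theorem sum_range_pencilRoots_le_add (hs : ∀ t, MonotoneOn (s t) (Set.Iio n))
    (hcp : ∀ t, (pencilMatrix x t).charpoly = ∏ i ∈ range n, (X - C (s t i))) (hmn : m ≤ n)
    (t : ℝ) : ∑ i ∈ range m, s t i ≤ ∑ i ∈ range m, s 0 i + m * t := by
  have h0 : univ.val.map x = (range n).val.map (s 0) := by
    simpa [pencilMatrix_zero, charpoly_diagonal, roots_prod_X_sub_C_eq_map] using
      congrArg roots (hcp 0)
  obtain ⟨φ, hφ, hsum⟩ := exists_injective_sum_eq_sum_range_of_map_eq (hs 0) h0 hmn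
  let u : Fin m → EuclideanSpace ℝ (Fin n) := fun j => EuclideanSpace.single (φ j) 1
  have hu : Orthonormal ℝ u := by
    simpa [u, Function.comp_def] using (EuclideanSpace.basisFun (Fin n) ℝ).orthonormal.comp φ hφ
  calc ∑ i ∈ range m, s t i ≤ ∑ j, ⟪u j, toEuclideanLin (pencilMatrix x t) (u j)⟫ :=
        (pencilMatrix_isHermitian x t).sum_range_le_sum_inner (hs t) (hcp t) hmn hu
    _ = ∑ j, (x (φ j) + t) := by
        simp [u, inner_toEuclideanLin_pencilMatrix]
    _ = ∑ i ∈ range m, s 0 i + m * t := by simp [sum_add_distrib, hsum]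

end PencilRoots

theorem monotoneOn_Iic_and_antitoneOn_Ici_of_supergradient {f : ℝ → ℝ} {a : ℝ}
    (hsup : ∀ c, ∃ S, ∀ t, f t ≤ f c + (t - c) * S) (hmax : ∀ t, f t ≤ f a) :
    MonotoneOn f (Set.Iic a) ∧ AntitoneOn f (Set.Ici a) := by
  constructor
  · intro y _ z hz hyz
    obtain ⟨S, hS⟩ := hsup z
    rcases (Set.mem_Iic.1 hz).eq_or_lt with rfl | hlt
    · exact hmax y
    · have : 0 ≤ S := by nlinarith [hS a, hmax z]
      nlinarith [hS y]
  · intro y hy z _ hyz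
    obtain ⟨S, hS⟩ := hsup y
    rcases (Set.mem_Ici.1 hy).eq_or_lt with rfl | hlt
    · exact hmax z
    · have : S ≤ 0 := by nlinarith [hS a, hmax y]
      nlinarith [hS z]

theorem pencil_partial_sums_monotone_general
    (n : ℕ) (P : Polynomial ℝ) (x : ℕ → ℝ)
    (hP : P = ∏ i ∈ Finset.range n, (X - C (x i)))
    (xs : ℝ → ℕ → ℝ)
    (hmono : ∀ lam : ℝ, ∀ i, i + 1 < n → xs lam i ≤ xs lam (i + 1))
    (hfact : ∀ lam : ℝ,
      P - C lam * derivative P = ∏ i ∈ Finset.range n, (X - C (xs lam i))) :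
    (∀ m, 1 ≤ m → m ≤ n - 1 →
      (∀ a b : ℝ, a ≤ b → b ≤ 0 →
        ∑ i ∈ Finset.range m, (xs a i - a) ≤ ∑ i ∈ Finset.range m, (xs b i - b)) ∧
      (∀ a b : ℝ, 0 ≤ a → a ≤ b →
        ∑ i ∈ Finset.range m, (xs b i - b) ≤ ∑ i ∈ Finset.range m, (xs a i - a))) ∧
    ∀ lam : ℝ,
      ∑ i ∈ Finset.range n, (xs lam i - lam) = ∑ i ∈ Finset.range n, xs 0 i := by
  subst hP
  have hsorted : ∀ t, MonotoneOn (xs t) (Set.Iio n) := fun t =>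
    monotoneOn_of_le_succ Set.ordConnected_Iio fun i _ _ hi => hmono t i hi
  have hcp : ∀ t, (pencilMatrix (fun k : Fin n => x k) t).charpoly =
      ∏ i ∈ range n, (X - C (xs t i)) := fun t => by
    rw [charpoly_pencilMatrix, Fin.prod_univ_eq_prod_range (fun i => X - C (x i)), hfact t]
  have hshift : ∀ m t, ∑ i ∈ range m, (xs t i - t) = ∑ i ∈ range m, xs t i - m * t := by
    simp [sum_sub_distrib]
  refine ⟨fun m _ hm => ?_, fun t => ?_⟩
  · have hmn : m ≤ n := by omega
    set f := fun t => ∑ i ∈ range m, (xs t i - t)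
    have hsup : ∀ c, ∃ S, ∀ t, f t ≤ f c + (t - c) * S := fun c => by
      obtain ⟨S, hS⟩ := exists_supergradient_sum_range_pencilRoots _ hsorted hcp hmn c
      exact ⟨S - m, fun t => by simp only [f, hshift]; linarith [hS t]⟩
    have hmax : ∀ t, f t ≤ f 0 := fun t => by
      simp only [f, hshift]
      linarith [sum_range_pencilRoots_le_add _ hsorted hcp hmn t]
    obtain ⟨hinc, hdec⟩ := monotoneOn_Iic_and_antitoneOn_Ici_of_supergradient hsup hmax
    exact ⟨fun a b hab hb => hinc (hab.trans hb) hb hab,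
      fun a b ha hab => hdec ha (ha.trans hab) hab⟩
  · have htrace : ∀ t, ∑ i ∈ range n, xs t i = ∑ i ∈ range n, x i + n * t := fun t => by
      rw [← trace_eq_sum_of_charpoly_eq_prod (hcp t), trace_pencilMatrix, Fintype.card_fin,
        Fin.sum_univ_eq_sum_range]
    rw [hshift, htrace, htrace]
    ring

/-- Monotony of the partial sums of the (shifted) ordered roots of the pencil `P - λP'`
of a monic hyperbolic polynomial: each `f_m(λ) = ∑_{i<m}(x_i(λ) - λ)` is nondecreasing on
`(-∞,0]` and nonincreasing on `[0,∞)`, while `f_n` is constant. -/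
theorem pencil_partial_sums_monotone
    (n : ℕ) (hn : 2 ≤ n) (P : Polynomial ℝ) (x : ℕ → ℝ)
    (hP : P = ∏ i ∈ Finset.range n, (X - C (x i)))
    (xs : ℝ → ℕ → ℝ)
    (hmono : ∀ lam : ℝ, ∀ i, i + 1 < n → xs lam i ≤ xs lam (i + 1))
    (hfact : ∀ lam : ℝ,
      P - C lam * derivative P = ∏ i ∈ Finset.range n, (X - C (xs lam i))) :
    (∀ m, 1 ≤ m → m ≤ n - 1 →
      (∀ a b : ℝ, a ≤ b → b ≤ 0 →
        ∑ i ∈ Finset.range m, (xs a i - a) ≤ ∑ i ∈ Finset.range m, (xs b i - b)) ∧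
      (∀ a b : ℝ, 0 ≤ a → a ≤ b →
        ∑ i ∈ Finset.range m, (xs b i - b) ≤ ∑ i ∈ Finset.range m, (xs a i - a))) ∧
    ∀ lam : ℝ,
      ∑ i ∈ Finset.range n, (xs lam i - lam) = ∑ i ∈ Finset.range n, xs 0 i :=
  pencil_partial_sums_monotone_general n P x hP xs hmono hfact
end

section
/- Let n ≥ 2 and let P, Q be monic hyperbolic polynomials of degree n such that the roots of Q are majorized by the roots of P. Then the roots of n⁻¹Q′ are majorized by the roots of n⁻¹P′ (as (n−1)-tuples); i.e., differentiation preserves the spectral order on monic hyperbolic polynomials. -/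
/-!
Write the roots of `P` as `z : Fin n → ℝ` and fix an orthogonal `U` whose first column is the
constant `(√n)⁻¹`. Deleting the first row and column of `Uᵀ * diagonal z * U` compresses
`diagonal z` to the hyperplane orthogonal to the constant vector; by the cofactor formula for the
adjugate, its characteristic polynomial is `n⁻¹ • P'`. So the roots of `P' / n` are the
eigenvalues of a symmetric matrix depending linearly on `z`. For convex `g`, the sum of `g` over
the eigenvalues is a convex function of the matrix (in any orthonormal basis the diagonal is a
doubly stochastic average of the eigenvalues), hence a convex, permutation invariant function of
`z`. Majorization puts the roots of `Q` in the convex hull of the permutations of the roots of `P`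
(Hahn–Banach, and Abel summation against a sorted functional), where such a function is bounded
by its value at the roots of `P`.
-/

open Polynomial Finset

open Matrix

namespace Matrix

variable {ι : Type*} [Fintype ι] [DecidableEq ι]

section CommRing

variable {R : Type*} [CommRing R]

theorem adjugate_transpose_mul_mul {U : Matrix ι ι R} (hU : Uᵀ * U = 1) (A : Matrix ι ι R) :
    adjugate (Uᵀ * A * U) = Uᵀ * adjugate A * U := by
  have hdet : U.det * U.det = 1 := by
    conv_lhs => arg 1; rw [← det_transpose U]
    rw [← det_mul, hU, det_one]
  have hadj : adjugate U = U.det • Uᵀ := by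
    calc adjugate U = adjugate U * U * Uᵀ := by
          rw [Matrix.mul_assoc, mul_eq_one_comm.mp hU, Matrix.mul_one]
      _ = U.det • Uᵀ := by rw [adjugate_mul, smul_mul, Matrix.one_mul]
  rw [adjugate_mul_distrib, adjugate_mul_distrib, ← adjugate_transpose, hadj, transpose_smul,
    transpose_transpose, Matrix.mul_smul, Matrix.smul_mul, Matrix.mul_smul, smul_smul, hdet,
    one_smul, Matrix.mul_assoc]

theorem charmatrix_submatrix {κ : Type*} [Fintype κ] [DecidableEq κ] (M : Matrix ι ι R)
    {e : κ → ι} (he : Function.Injective e) :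
    charmatrix (M.submatrix e e) = (charmatrix M).submatrix e e := by
  ext k l : 1
  by_cases h : k = l
  · simp [h]
  · simp [charmatrix_apply_ne _ _ _ h, charmatrix_apply_ne _ _ _ (he.ne h)]

theorem charmatrix_transpose_mul_mul {U : Matrix ι ι R} (hU : Uᵀ * U = 1) (A : Matrix ι ι R) :
    charmatrix (Uᵀ * A * U) = (U.map C)ᵀ * charmatrix A * U.map C := by
  have hUC : (U.map C)ᵀ * U.map C = 1 := by
    rw [← transpose_map, ← Matrix.map_mul, hU, Matrix.map_one _ C_0 C_1]
  simp only [charmatrix, Matrix.mul_sub, Matrix.sub_mul, RingHom.mapMatrix_apply,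
    Matrix.map_mul, transpose_map]
  rw [scalar_apply, ← smul_one_eq_diagonal, Matrix.mul_smul, Matrix.mul_one, Matrix.smul_mul, hUC]

end CommRing

section Real

variable {g : ℝ → ℝ}

theorem sum_comp_mulVec_le_of_mem_doublyStochastic {D : Matrix ι ι ℝ}
    (hD : D ∈ doublyStochastic ℝ ι) (hg : ConvexOn ℝ Set.univ g) (v : ι → ℝ) :
    ∑ i, g ((D *ᵥ v) i) ≤ ∑ i, g (v i) := by
  rw [mem_doublyStochastic_iff_sum] at hD
  obtain ⟨hnonneg, hrow, hcol⟩ := hD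
  calc ∑ i, g ((D *ᵥ v) i) ≤ ∑ i, ∑ j, D i j * g (v j) := by
        refine sum_le_sum fun i _ => ?_
        simpa [mulVec, dotProduct] using
          hg.map_sum_le (fun j _ => hnonneg i j) (hrow i) (fun j _ => Set.mem_univ (v j))
    _ = ∑ i, g (v i) := by
        rw [sum_comm]
        simp [← sum_mul, hcol]

theorem map_sq_mem_doublyStochastic {Q : Matrix ι ι ℝ} (hQ : Q ∈ unitaryGroup ι ℝ) :
    Q.map (· ^ 2) ∈ doublyStochastic ℝ ι := by
  have hrow := congr_fun₂ (mem_unitaryGroup_iff.mp hQ)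
  have hcol := congr_fun₂ (mem_unitaryGroup_iff'.mp hQ)
  refine mem_doublyStochastic_iff_sum.mpr ⟨fun i j => sq_nonneg _, fun i => ?_, fun j => ?_⟩
  · simpa [Matrix.mul_apply, sq] using hrow i i
  · simpa [Matrix.mul_apply, sq] using hcol j j

theorem diag_mul_diagonal_mul_transpose (Q : Matrix ι ι ℝ) (d : ι → ℝ) (i : ι) :
    (Q * diagonal d * Qᵀ) i i = (Q.map (· ^ 2) *ᵥ d) i := by
  rw [Matrix.mul_apply]
  simp only [mul_diagonal, transpose_apply, mulVec, dotProduct, map_apply]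
  exact sum_congr rfl fun j _ => by ring

theorem IsHermitian.sum_comp_diag_conj_le {S : Matrix ι ι ℝ} (hS : S.IsHermitian)
    (hg : ConvexOn ℝ Set.univ g) {O : Matrix ι ι ℝ} (hO : O ∈ unitaryGroup ι ℝ) :
    ∑ i, g ((star O * S * O) i i) ≤ ∑ i, g (hS.eigenvalues i) := by
  set W : Matrix ι ι ℝ := (hS.eigenvectorUnitary : Matrix ι ι ℝ)
  have hQ : star O * W ∈ unitaryGroup ι ℝ :=
    mul_mem (Unitary.star_mem hO) hS.eigenvectorUnitary.2
  have hconj : star O * S * O = (star O * W) * diagonal hS.eigenvalues * (star O * W)ᵀ := by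
    conv_lhs => rw [hS.spectral_theorem, Unitary.conjStarAlgAut_apply]
    simp [W, Matrix.mul_assoc, star_eq_conjTranspose, conjTranspose_eq_transpose_of_trivial]
  simp only [hconj, diag_mul_diagonal_mul_transpose]
  exact sum_comp_mulVec_le_of_mem_doublyStochastic (map_sq_mem_doublyStochastic hQ) hg _

theorem IsHermitian.sum_comp_eigenvalues_smul_add_smul_le {A B M : Matrix ι ι ℝ}
    (hA : A.IsHermitian) (hB : B.IsHermitian) (hM : M.IsHermitian) (hg : ConvexOn ℝ Set.univ g)
    {a b : ℝ} (ha : 0 ≤ a) (hb : 0 ≤ b) (hab : a + b = 1) (hMAB : M = a • A + b • B) :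
    ∑ i, g (hM.eigenvalues i) ≤
      a * ∑ i, g (hA.eigenvalues i) + b * ∑ i, g (hB.eigenvalues i) := by
  set W : Matrix ι ι ℝ := (hM.eigenvectorUnitary : Matrix ι ι ℝ)
  have hdiag : star W * M * W = diagonal hM.eigenvalues := by
    simpa [Unitary.conjStarAlgAut_star_apply] using hM.conjStarAlgAut_star_eigenvectorUnitary
  have heig (i : ι) :
      hM.eigenvalues i = a * (star W * A * W) i i + b * (star W * B * W) i i := by
    have hconj : star W * M * W = a • (star W * A * W) + b • (star W * B * W) := by
      rw [hMAB, Matrix.mul_add, Matrix.add_mul, Matrix.mul_smul, Matrix.mul_smul,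
        Matrix.smul_mul, Matrix.smul_mul]
    simpa using congr_fun₂ (hdiag.symm.trans hconj) i i
  calc ∑ i, g (hM.eigenvalues i)
      ≤ ∑ i, (a * g ((star W * A * W) i i) + b * g ((star W * B * W) i i)) := by
        refine sum_le_sum fun i _ => ?_
        simpa [heig i] using hg.2 (Set.mem_univ _) (Set.mem_univ _) ha hb hab
    _ = a * ∑ i, g ((star W * A * W) i i) + b * ∑ i, g ((star W * B * W) i i) := by
        rw [sum_add_distrib, mul_sum, mul_sum]
    _ ≤ a * ∑ i, g (hA.eigenvalues i) + b * ∑ i, g (hB.eigenvalues i) := by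
        have hW := hM.eigenvectorUnitary.2
        exact add_le_add (mul_le_mul_of_nonneg_left (hA.sum_comp_diag_conj_le hg hW) ha)
          (mul_le_mul_of_nonneg_left (hB.sum_comp_diag_conj_le hg hW) hb)

end Real

end Matrix

section Compression

variable {R : Type*} [CommRing R] {m : ℕ}

def compression (U : Matrix (Fin (m + 1)) (Fin (m + 1)) R) (z : Fin (m + 1) → R) :
    Matrix (Fin m) (Fin m) R :=
  (Uᵀ * diagonal z * U).submatrix Fin.succ Fin.succ

theorem charpoly_compression {U : Matrix (Fin (m + 1)) (Fin (m + 1)) R}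
    (hU : Uᵀ * U = 1) (z : Fin (m + 1) → R) :
    (compression U z).charpoly =
      ∑ i, C (U i 0 ^ 2) * ∏ j ∈ univ.erase i, (X - C (z j)) := by
  set UC := U.map C
  have hUC : UCᵀ * UC = 1 := by
    rw [← transpose_map, ← Matrix.map_mul, hU, Matrix.map_one _ C_0 C_1]
  set A := UCᵀ * diagonal (fun i => X - C (z i)) * UC
  have hA : A.submatrix Fin.succ Fin.succ = (compression U z).charmatrix := by
    rw [compression, charmatrix_submatrix _ (Fin.succ_injective m),
      charmatrix_transpose_mul_mul hU, charmatrix_diagonal]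
  have h00 := adjugate_fin_succ_eq_det_submatrix A 0 0
  simp only [Fin.val_zero, add_zero, pow_zero, one_mul, Fin.succAbove_zero, hA] at h00
  rw [charpoly, ← h00, adjugate_transpose_mul_mul hUC, adjugate_diagonal]
  rw [Matrix.mul_apply]
  simp only [mul_diagonal, transpose_apply, map_apply, UC, sq, map_mul]
  exact sum_congr rfl fun i _ => by ring

theorem charpoly_compression_of_forall_eq {U : Matrix (Fin (m + 1)) (Fin (m + 1)) R}
    (hU : Uᵀ * U = 1) {c : R} (hU0 : ∀ i, U i 0 = c) (z : Fin (m + 1) → R) :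
    (compression U z).charpoly = C (c ^ 2) * derivative (∏ i, (X - C (z i))) := by
  simp [charpoly_compression hU, hU0, derivative_prod_finset, mul_sum]

theorem compression_smul_add_smul (U : Matrix (Fin (m + 1)) (Fin (m + 1)) R) (a b : R)
    (z z' : Fin (m + 1) → R) :
    compression U (a • z + b • z') = a • compression U z + b • compression U z' := by
  have hdiag : diagonal (a • z + b • z') = a • diagonal z + b • diagonal z' := by
    rw [← diagonal_smul, ← diagonal_smul, diagonal_add]
    rfl
  rw [compression, hdiag, Matrix.mul_add, Matrix.add_mul,
    Matrix.mul_smul, Matrix.mul_smul, Matrix.smul_mul, Matrix.smul_mul]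
  rfl

end Compression

theorem exists_orthogonal_col_zero_eq_inv_sqrt (m : ℕ) :
    ∃ U : Matrix (Fin (m + 1)) (Fin (m + 1)) ℝ,
      Uᵀ * U = 1 ∧ ∀ i, U i 0 = (√(m + 1 : ℝ))⁻¹ := by
  set v : EuclideanSpace ℝ (Fin (m + 1)) := WithLp.toLp 2 fun _ => (√(m + 1 : ℝ))⁻¹
  have hv : Orthonormal ℝ (({0} : Set (Fin (m + 1))).domRestrict fun _ => v) := by
    rw [orthonormal_iff_ite]
    rintro ⟨i, rfl⟩ ⟨j, rfl⟩
    have hm : 0 < √(m + 1 : ℝ) := by positivity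
    simp [v, EuclideanSpace.norm_eq, hm.ne']
  obtain ⟨b, hb⟩ := hv.exists_orthonormalBasis_extension_of_card_eq (by simp)
  refine ⟨(EuclideanSpace.basisFun _ ℝ).toBasis.toMatrix b, (mem_orthogonalGroup_iff' _ ℝ).mp
    ((EuclideanSpace.basisFun _ ℝ).toMatrix_orthonormalBasis_mem_orthogonal b), fun i => ?_⟩
  simp [Module.Basis.toMatrix_apply, hb 0 rfl, v]

section RealCompression

variable {m : ℕ} {g : ℝ → ℝ}

theorem isHermitian_compression (U : Matrix (Fin (m + 1)) (Fin (m + 1)) ℝ)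
    (z : Fin (m + 1) → ℝ) :
    (compression U z).IsHermitian := by
  simpa [compression, conjTranspose_eq_transpose_of_trivial] using
    ((isHermitian_conjTranspose_mul_mul U (isHermitian_diagonal z)).submatrix Fin.succ)

theorem convexOn_sum_comp_eigenvalues_compression (U : Matrix (Fin (m + 1)) (Fin (m + 1)) ℝ)
    (hg : ConvexOn ℝ Set.univ g) :
    ConvexOn ℝ Set.univ fun z => ∑ k, g ((isHermitian_compression U z).eigenvalues k) :=
  ⟨convex_univ, fun z _ z' _ a b ha hb hab => by
    simpa [smul_eq_mul] using (isHermitian_compression U z).sum_comp_eigenvalues_smul_add_smul_le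
      (isHermitian_compression U z') (isHermitian_compression U _) hg ha hb hab
      (compression_smul_add_smul U a b z z')⟩

theorem eigenvalues_compression_comp_perm {U : Matrix (Fin (m + 1)) (Fin (m + 1)) ℝ}
    (hU : Uᵀ * U = 1) {c : ℝ} (hU0 : ∀ i, U i 0 = c) (z : Fin (m + 1) → ℝ)
    (σ : Equiv.Perm (Fin (m + 1))) :
    (isHermitian_compression U (z ∘ σ)).eigenvalues =
      (isHermitian_compression U z).eigenvalues := by
  rw [IsHermitian.eigenvalues_eq_eigenvalues_iff, charpoly_compression_of_forall_eq hU hU0,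
    charpoly_compression_of_forall_eq hU hU0]
  simp only [Function.comp_apply, Equiv.prod_comp σ fun i => X - C (z i)]

theorem sum_comp_eigenvalues_compression_le {U : Matrix (Fin (m + 1)) (Fin (m + 1)) ℝ}
    (hU : Uᵀ * U = 1) {c : ℝ} (hU0 : ∀ i, U i 0 = c) {x y : Fin (m + 1) → ℝ}
    (hyx : y ∈ convexHull ℝ (Set.range fun σ : Equiv.Perm (Fin (m + 1)) => x ∘ σ))
    (hg : ConvexOn ℝ Set.univ g) :
    ∑ k, g ((isHermitian_compression U y).eigenvalues k) ≤
      ∑ k, g ((isHermitian_compression U x).eigenvalues k) := by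
  obtain ⟨_, ⟨σ, rfl⟩, hle⟩ := (convexOn_sum_comp_eigenvalues_compression U hg)
    |>.exists_ge_of_mem_convexHull (Set.subset_univ _) hyx
  rwa [eigenvalues_compression_comp_perm hU hU0] at hle

theorem prod_X_sub_C_eigenvalues_compression {U : Matrix (Fin (m + 1)) (Fin (m + 1)) ℝ}
    (hU : Uᵀ * U = 1) (hU0 : ∀ i, U i 0 = (√(m + 1 : ℝ))⁻¹) (z : Fin (m + 1) → ℝ) :
    ∏ k, (X - C ((isHermitian_compression U z).eigenvalues k)) =
      C (m + 1 : ℝ)⁻¹ * derivative (∏ i, (X - C (z i))) := by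
  have hc : ((√(m + 1 : ℝ))⁻¹) ^ 2 = (m + 1 : ℝ)⁻¹ := by
    rw [inv_pow, Real.sq_sqrt (by positivity)]
  simpa [hc] using ((isHermitian_compression U z).charpoly_eq).symm.trans
    (charpoly_compression_of_forall_eq hU hU0 z)

end RealCompression

theorem convexOn_max_sub_zero (t : ℝ) : ConvexOn ℝ Set.univ fun s : ℝ => max (t - s) 0 :=
  ((convexOn_const t convex_univ).sub (concaveOn_id convex_univ)).sup
    (convexOn_const 0 convex_univ)

theorem sum_range_mul_le_of_sum_range_le {n : ℕ} {a x y : ℕ → ℝ}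
    (ha : MonotoneOn a (Set.Iio n))
    (hpart : ∀ k < n, ∑ j ∈ range k, x j ≤ ∑ j ∈ range k, y j)
    (htot : ∑ j ∈ range n, y j = ∑ j ∈ range n, x j) :
    ∑ j ∈ range n, a j * y j ≤ ∑ j ∈ range n, a j * x j := by
  have hparts := sum_range_by_parts a (fun j => y j - x j) n
  simp only [smul_eq_mul, sum_sub_distrib, htot, sub_self, mul_zero, zero_sub, mul_sub] at hparts
  have key : 0 ≤ ∑ i ∈ range (n - 1), (a (i + 1) - a i) *
      (∑ j ∈ range (i + 1), y j - ∑ j ∈ range (i + 1), x j) := by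
    refine sum_nonneg fun i hi => mul_nonneg ?_ ?_
    · rw [mem_range] at hi
      exact sub_nonneg.mpr (ha (by simp; omega) (by simp; omega) (by omega))
    · exact sub_nonneg.mpr (hpart _ (by rw [mem_range] at hi; omega))
  simp only [mul_sub, sum_sub_distrib] at key
  linarith

theorem sum_range_le_of_sum_max_sub_le {n k : ℕ} {x y : ℕ → ℝ}
    (hx : MonotoneOn x (Set.Iio n))
    (hxy : ∀ t, ∑ j ∈ range n, max (t - y j) 0 ≤ ∑ j ∈ range n, max (t - x j) 0)
    (hk : k ≤ n) : ∑ j ∈ range k, x j ≤ ∑ j ∈ range k, y j := by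
  obtain rfl | hk0 := k.eq_zero_or_pos
  · simp
  -- the hinge at the `k`-th smallest value of `x` cuts off exactly the first `k` terms
  set t := x (k - 1)
  have hxt : ∑ j ∈ range n, max (t - x j) 0 = ∑ j ∈ range k, (t - x j) := by
    rw [← sum_range_add_sum_Ico _ hk]
    have hlow : ∀ j ∈ range k, max (t - x j) 0 = t - x j := fun j hj => by
      rw [mem_range] at hj
      exact max_eq_left (sub_nonneg.mpr (hx (by simp; omega) (by simp; omega) (by omega)))
    have hhigh : ∀ j ∈ Ico k n, max (t - x j) 0 = 0 := fun j hj => by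
      rw [mem_Ico] at hj
      exact max_eq_right (sub_nonpos.mpr (hx (by simp; omega) (by simpa using hj.2) (by omega)))
    rw [sum_congr rfl hlow, sum_eq_zero hhigh, add_zero]
  calc ∑ j ∈ range k, x j = k * t - ∑ j ∈ range n, max (t - x j) 0 := by
        simp [hxt, sum_sub_distrib]
    _ ≤ k * t - ∑ j ∈ range n, max (t - y j) 0 := by linarith [hxy t]
    _ ≤ k * t - ∑ j ∈ range k, max (t - y j) 0 := by gcongr
    _ = ∑ j ∈ range k, (t - max (t - y j) 0) := by simp [sum_sub_distrib]
    _ ≤ ∑ j ∈ range k, y j := sum_le_sum fun j _ => by linarith [le_max_left (t - y j) 0]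

theorem sum_mul_le_of_sum_max_sub_le {n : ℕ} {a x y : Fin n → ℝ} (ha : Monotone a)
    (hx : Monotone x) (hsum : ∑ i, y i = ∑ i, x i)
    (hxy : ∀ t, ∑ i, max (t - y i) 0 ≤ ∑ i, max (t - x i) 0) :
    ∑ i, a i * y i ≤ ∑ i, a i * x i := by
  let ext (f : Fin n → ℝ) (j : ℕ) : ℝ := if h : j < n then f ⟨j, h⟩ else 0
  have hext {f : Fin n → ℝ} (hf : Monotone f) : MonotoneOn (ext f) (Set.Iio n) :=
    fun i hi j hj hij => by simpa [ext, hi.out, hj.out] using hf (Fin.mk_le_mk.mpr hij)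
  have := sum_range_mul_le_of_sum_range_le (y := ext y) (hext ha)
    (fun k hk => sum_range_le_of_sum_max_sub_le (hext hx) (by simpa [sum_range, ext] using hxy)
      hk.le)
    (by simpa [sum_range, ext] using hsum)
  simpa [sum_range, ext] using this

theorem exists_perm_sum_mul_le {n : ℕ} {x y : Fin n → ℝ} (hsum : ∑ i, y i = ∑ i, x i)
    (hxy : ∀ t, ∑ i, max (t - y i) 0 ≤ ∑ i, max (t - x i) 0) (a : Fin n → ℝ) :
    ∃ σ : Equiv.Perm (Fin n), ∑ i, a i * y i ≤ ∑ i, a i * x (σ i) := by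
  set ρ := Tuple.sort a
  set τ := Tuple.sort x
  have hsorted := sum_mul_le_of_sum_max_sub_le (a := a ∘ ρ) (x := x ∘ τ) (y := y ∘ ρ)
    (Tuple.monotone_sort a) (Tuple.monotone_sort x) (by simpa [Equiv.sum_comp] using hsum)
    fun t => by
      simpa only [Function.comp_apply, Equiv.sum_comp ρ fun i => max (t - y i) 0,
        Equiv.sum_comp τ fun i => max (t - x i) 0] using hxy t
  refine ⟨ρ.symm.trans τ, ?_⟩
  calc ∑ i, a i * y i = ∑ i, a (ρ i) * y (ρ i) := (Equiv.sum_comp ρ fun i => a i * y i).symm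
    _ ≤ ∑ i, a (ρ i) * x (τ i) := hsorted
    _ = ∑ i, a i * x ((ρ.symm.trans τ) i) := by
        rw [← Equiv.sum_comp ρ fun i => a i * x ((ρ.symm.trans τ) i)]
        simp

theorem mem_convexHull_perm_of_sum_max_sub_le {n : ℕ} {x y : Fin n → ℝ}
    (hsum : ∑ i, y i = ∑ i, x i)
    (hxy : ∀ t, ∑ i, max (t - y i) 0 ≤ ∑ i, max (t - x i) 0) :
    y ∈ convexHull ℝ (Set.range fun σ : Equiv.Perm (Fin n) => x ∘ σ) := by
  by_contra hy
  obtain ⟨f, s, hfy, hfx⟩ := geometric_hahn_banach_point_closed (convex_convexHull ℝ _)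
    ((Set.finite_range _).isCompact_convexHull (𝕜 := ℝ)).isClosed hy
  have hf := f.toLinearMap.pi_apply_eq_sum_univ
  obtain ⟨σ, hσ⟩ :=
    exists_perm_sum_mul_le hsum hxy fun i => -f fun j => if i = j then 1 else 0
  have hfσ := hfx (x ∘ σ) (subset_convexHull ℝ _ ⟨σ, rfl⟩)
  simp only [ContinuousLinearMap.coe_coe] at hf
  rw [hf] at hfy hfσ
  simp only [Function.comp_apply, smul_eq_mul, mul_neg, sum_neg_distrib, neg_le_neg_iff,
    mul_comm] at hσ hfy hfσ
  linarith

theorem MajorizedOn.mem_convexHull_perm {n : ℕ} {x y : ℕ → ℝ} (h : MajorizedOn n y x) :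
    (fun i : Fin n => y i) ∈
      convexHull ℝ (Set.range fun σ : Equiv.Perm (Fin n) => (fun i : Fin n => x i) ∘ σ) := by
  refine mem_convexHull_perm_of_sum_max_sub_le ?_ fun t => ?_
  · have hle := h id (convexOn_id convex_univ)
    have hge := h (fun s => -s) (concaveOn_id convex_univ).neg
    simp only [id, sum_neg_distrib, neg_le_neg_iff] at hle hge
    simpa only [Fin.sum_univ_eq_sum_range] using le_antisymm hle hge
  · simpa only [Fin.sum_univ_eq_sum_range fun i => max (t - y i) 0,
      Fin.sum_univ_eq_sum_range fun i => max (t - x i) 0] using h _ (convexOn_max_sub_zero t)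

/-- Differentiation preserves the spectral order: if the roots of `Q` are majorized by
those of `P`, then the roots of `n⁻¹Q'` are majorized by those of `n⁻¹P'`. -/
theorem derivative_preserves_spectral_order
    (n : ℕ) (hn : 2 ≤ n) (x y : ℕ → ℝ)
    (P Q : Polynomial ℝ)
    (hP : P = ∏ i ∈ Finset.range n, (X - C (x i)))
    (hQ : Q = ∏ i ∈ Finset.range n, (X - C (y i)))
    (hmaj : MajorizedOn n y x) :
    ∃ u v : ℕ → ℝ,
      C (n : ℝ)⁻¹ * derivative P = ∏ i ∈ Finset.range (n - 1), (X - C (u i)) ∧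
      C (n : ℝ)⁻¹ * derivative Q = ∏ i ∈ Finset.range (n - 1), (X - C (v i)) ∧
      MajorizedOn (n - 1) v u := by
  obtain ⟨m, rfl⟩ : ∃ m, n = m + 1 := ⟨n - 1, by omega⟩
  obtain ⟨U, hU, hU0⟩ := exists_orthogonal_col_zero_eq_inv_sqrt m
  let eig (w : ℕ → ℝ) := (isHermitian_compression U fun i : Fin (m + 1) => w i).eigenvalues
  let roots (w : ℕ → ℝ) : ℕ → ℝ := Function.extend Fin.val (eig w) 0
  have hroots (w : ℕ → ℝ) :
      C ((m + 1 : ℕ) : ℝ)⁻¹ * derivative (∏ i ∈ range (m + 1), (X - C (w i))) =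
        ∏ i ∈ range (m + 1 - 1), (X - C (roots w i)) := by
    simpa [roots, ← Fin.prod_univ_eq_prod_range, Fin.val_injective.extend_apply] using
      (prod_X_sub_C_eigenvalues_compression hU hU0 fun i => w i).symm
  refine ⟨roots x, roots y, hP ▸ hroots x, hQ ▸ hroots y, fun g hg => ?_⟩
  simpa [roots, ← Fin.sum_univ_eq_sum_range, Fin.val_injective.extend_apply] using
    sum_comp_eigenvalues_compression_le hU hU0 hmaj.mem_convexHull_perm hg
end

section
/- Let n ≥ 2 and P a monic hyperbolic polynomial of degree n. For ε ≠ 0, the polynomial (1 − εD)^{n−1}P (where D = d/dx) is a monic strictly hyperbolic polynomial of degree n; in particular, every monic hyperbolic polynomial is a locally uniform limit of monic strictly hyperbolic polynomials of the same degree. -/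
/-!
For `ε ≠ 0` we have `p - ε p' = -ε e^{x/ε} (e^{-x/ε} p)'`. If `p` is hyperbolic with distinct
roots `a₁ < ⋯ < a_r` of multiplicities `m₁, …, m_r`, Rolle's theorem for `e^{-x/ε} p` yields a
root of `p - ε p'` in each gap `(aᵢ, aᵢ₊₁)`, and, since `e^{-x/ε} p` tends to `0` at `+∞` when
`ε > 0` and at `-∞` when `ε < 0`, one more root beyond the extreme root of `p`; moreover each `aᵢ`
stays a root of multiplicity exactly `mᵢ - 1`. That makes `n` roots, so `p - ε p'` is hyperbolic,
its new roots are simple and every multiple root loses one unit of multiplicity. After `n - 1`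
steps all roots are simple. The convergence is the joint continuity of `(ε, z) ↦ Q_ε(z)`.
-/

open Polynomial Finset Filter Topology

theorem Continuous.tendstoUniformlyOn_of_isCompact {α β γ : Type*} [UniformSpace α]
    [WeaklyLocallyCompactSpace α] [UniformSpace β] [UniformSpace γ] {f : α → β → γ}
    (hf : Continuous ↿f) {K : Set β} (hK : IsCompact K) (x : α) :
    TendstoUniformlyOn f (f x) (𝓝 x) K := by
  have := isCompact_iff_compactSpace.1 hK
  exact tendstoUniformlyOn_iff_tendstoUniformly_comp_coe.2
    (Continuous.tendstoUniformly (fun a (z : K) => f a z) (by fun_prop) x)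

theorem exists_gt_hasDerivAt_eq_zero_of_tendsto_atTop {f f' : ℝ → ℝ} {a b : ℝ} (hab : a < b)
    (hf : ∀ x, HasDerivAt f (f' x) x) (ha : f a = 0) (hb : f b ≠ 0)
    (hlim : Tendsto f atTop (𝓝 0)) : ∃ c, a < c ∧ f' c = 0 := by
  wlog hpos : 0 < f b generalizing f f'
  · obtain ⟨c, hac, hc⟩ := this (f := fun x => -f x) (fun x => (hf x).neg) (by simp [ha])
      (neg_ne_zero.2 hb) (by simpa using hlim.neg) (neg_pos.2 ((not_lt.1 hpos).lt_of_ne hb))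
    exact ⟨c, hac, neg_eq_zero.1 hc⟩
  obtain ⟨X, hbX, hX⟩ := ((eventually_gt_atTop b).and (hlim.eventually (gt_mem_nhds hpos))).exists
  obtain ⟨m, hm, hmax⟩ := isCompact_Icc.exists_isMaxOn (Set.nonempty_Icc.2 (hab.trans hbX).le)
    fun x _ => (hf x).continuousAt.continuousWithinAt
  have hbm : f b ≤ f m := hmax ⟨hab.le, hbX.le⟩
  have ham : a < m := hm.1.lt_of_ne (by rintro rfl; linarith)
  have hmX : m < X := hm.2.lt_of_ne (by rintro rfl; linarith)
  exact ⟨m, ham, (hmax.isLocalMax (Icc_mem_nhds ham hmX)).hasDerivAt_eq_zero (hf m)⟩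

theorem exists_lt_hasDerivAt_eq_zero_of_tendsto_atBot {f f' : ℝ → ℝ} {a b : ℝ} (hba : b < a)
    (hf : ∀ x, HasDerivAt f (f' x) x) (ha : f a = 0) (hb : f b ≠ 0)
    (hlim : Tendsto f atBot (𝓝 0)) : ∃ c, c < a ∧ f' c = 0 := by
  obtain ⟨c, hac, hc⟩ := exists_gt_hasDerivAt_eq_zero_of_tendsto_atTop (f := fun x => f (-x))
    (neg_lt_neg hba) (fun x => (hf (-x)).comp x (hasDerivAt_neg x)) (by simpa using ha)
    (by simpa using hb) (hlim.comp tendsto_neg_atTop_atBot)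
  exact ⟨-c, neg_lt.1 hac, by simpa using hc⟩

namespace Polynomial

section CommRing

variable {R : Type*} [CommRing R] {p : R[X]}

noncomputable def oneSubSmulDerivative (ε : R) : Module.End R R[X] := 1 - ε • derivative

theorem degree_smul_derivative_lt (hp : p ≠ 0) (ε : R) : degree (ε • derivative p) < degree p :=
  (degree_smul_le ε _).trans_lt (degree_derivative_lt hp)

theorem sub_smul_derivative_ne_zero (hp : p ≠ 0) (ε : R) : p - ε • derivative p ≠ 0 := by
  rw [← degree_ne_bot, degree_sub_eq_left_of_degree_lt (degree_smul_derivative_lt hp ε)]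
  exact degree_ne_bot.2 hp

theorem Monic.sub_smul_derivative (hp : p.Monic) (ε : R) : (p - ε • derivative p).Monic := by
  nontriviality R
  exact hp.sub_of_left (degree_smul_derivative_lt hp.ne_zero ε)

theorem natDegree_sub_smul_derivative (p : R[X]) (ε : R) :
    (p - ε • derivative p).natDegree = p.natDegree := by
  rcases eq_or_ne p 0 with rfl | hp
  · simp
  exact natDegree_eq_of_degree_eq (degree_sub_eq_left_of_degree_lt (degree_smul_derivative_lt hp ε))

theorem oneSubSmulDerivative_pow_succ_apply (ε : R) (k : ℕ) (p : R[X]) :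
    (oneSubSmulDerivative ε ^ (k + 1)) p =
      (oneSubSmulDerivative ε ^ k) p - ε • derivative ((oneSubSmulDerivative ε ^ k) p) := by
  rw [pow_succ', Module.End.mul_apply]
  rfl

theorem oneSubSmulDerivative_pow_apply (ε : R) (m : ℕ) (p : R[X]) :
    (oneSubSmulDerivative ε ^ m) p =
      ∑ k ∈ range (m + 1), C ((m.choose k : R) * (-ε) ^ k) * derivative^[k] p := by
  rw [oneSubSmulDerivative, sub_eq_neg_add,
    show -(ε • derivative : Module.End R R[X]) = (-ε) • derivative from (neg_smul ε _).symm,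
    (Commute.one_right _).add_pow, LinearMap.sum_apply]
  refine Finset.sum_congr rfl fun k _ => ?_
  rw [one_pow, mul_one, _root_.smul_pow, ← (Nat.cast_commute _ _).eq, Module.End.mul_apply,
    Module.End.natCast_apply, LinearMap.smul_apply, Module.End.pow_apply,
    ← Nat.cast_smul_eq_nsmul R, smul_smul, smul_eq_C_mul]

theorem oneSubSmulDerivative_pow_apply_ne_zero (hp : p ≠ 0) (ε : R) (k : ℕ) :
    (oneSubSmulDerivative ε ^ k) p ≠ 0 := by
  induction k with
  | zero => exact hp
  | succ k ih => rw [oneSubSmulDerivative_pow_succ_apply]; exact sub_smul_derivative_ne_zero ih ε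

theorem Monic.oneSubSmulDerivative_pow_apply (hp : p.Monic) (ε : R) (k : ℕ) :
    ((oneSubSmulDerivative ε ^ k) p).Monic := by
  induction k with
  | zero => exact hp
  | succ k ih => rw [oneSubSmulDerivative_pow_succ_apply]; exact ih.sub_smul_derivative ε

theorem natDegree_oneSubSmulDerivative_pow_apply (p : R[X]) (ε : R) (k : ℕ) :
    ((oneSubSmulDerivative ε ^ k) p).natDegree = p.natDegree := by
  induction k with
  | zero => rfl
  | succ k ih => rw [oneSubSmulDerivative_pow_succ_apply, natDegree_sub_smul_derivative, ih]

end CommRing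

theorem rootMultiplicity_sub_smul_derivative {K : Type*} [Field K] [CharZero K] {p : K[X]}
    {ε a : K} (hε : ε ≠ 0) (hp : p ≠ 0) (ha : p.IsRoot a) :
    (p - ε • derivative p).rootMultiplicity a = p.rootMultiplicity a - 1 := by
  set m := p.rootMultiplicity a
  have hm : 0 < m := (rootMultiplicity_pos hp).2 ha
  have hp' : derivative p ≠ 0 := fun h0 => by
    rw [eq_C_of_derivative_eq_zero h0, IsRoot, eval_C] at ha
    exact hp (by rw [eq_C_of_derivative_eq_zero h0, ha, C_0])
  have hdp : (derivative p).rootMultiplicity a = m - 1 := derivative_rootMultiplicity_of_root ha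
  have hnot : ¬(X - C a) ^ m ∣ p - ε • derivative p := fun hdvd => by
    have : (X - C a) ^ m ∣ derivative p := by
      rw [← dvd_C_mul hε, ← smul_eq_C_mul, ← sub_sub_cancel p (ε • derivative p)]
      exact dvd_sub (pow_rootMultiplicity_dvd p a) hdvd
    have := (le_rootMultiplicity_iff hp').2 this
    omega
  have hq : p - ε • derivative p ≠ 0 := fun h0 => hnot (h0 ▸ dvd_zero _)
  refine le_antisymm ((rootMultiplicity_le_iff hq a _).2 (by rwa [Nat.sub_add_cancel hm]))
    ((le_rootMultiplicity_iff hq).2 (dvd_sub ?_ ?_))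
  · exact (pow_dvd_pow _ (Nat.sub_le m 1)).trans (pow_rootMultiplicity_dvd p a)
  · rw [smul_eq_C_mul]
    exact dvd_mul_of_dvd_right (hdp ▸ pow_rootMultiplicity_dvd (derivative p) a) _

theorem Monic.exists_strictMono_eq_prod_X_sub_C {K : Type*} [Field K] [LinearOrder K]
    {q : K[X]} (hq : q.Monic) (hsplit : q.Splits) (hnodup : q.roots.Nodup) :
    ∃ y : ℕ → K, (∀ i, i + 1 < q.natDegree → y i < y (i + 1)) ∧
      q = ∏ i ∈ range q.natDegree, (X - C (y i)) := by
  have hcard : q.roots.toFinset.card = q.natDegree := by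
    rw [Multiset.toFinset_card_of_nodup hnodup, splits_iff_card_roots.1 hsplit]
  set e := q.roots.toFinset.orderEmbOfFin hcard
  refine ⟨fun i => if h : i < q.natDegree then e ⟨i, h⟩ else 0, fun i hi => ?_, ?_⟩
  · simp only [dif_pos hi, dif_pos (Nat.lt_of_succ_lt hi)]
    exact e.strictMono (Fin.mk_lt_mk.2 (Nat.lt_succ_self i))
  · rw [← Fin.prod_univ_eq_prod_range]
    simp only [Fin.is_lt, dif_pos, Fin.eta]
    calc q = ∏ a ∈ q.roots.toFinset, (X - C a) := by
          rw [Finset.prod_eq_multiset_prod, Multiset.toFinset_val, Multiset.dedup_eq_self.2 hnodup]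
          exact hsplit.eq_prod_roots_of_monic hq
      _ = ∏ a ∈ univ.map e.toEmbedding, (X - C a) := by rw [map_orderEmbOfFin_univ]
      _ = ∏ i, (X - C (e i)) := Finset.prod_map _ _ _

section Real

variable {ε : ℝ} {p : ℝ[X]}

theorem hasDerivAt_exp_neg_div_mul_eval (hε : ε ≠ 0) (p : ℝ[X]) (x : ℝ) :
    HasDerivAt (fun x => Real.exp (-x / ε) * p.eval x)
      (-(Real.exp (-x / ε) / ε) * (p - ε • derivative p).eval x) x := by
  refine ((((hasDerivAt_id' x).neg.div_const ε).exp).mul (p.hasDerivAt x)).congr_deriv ?_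
  simp only [Pi.neg_apply, eval_sub, eval_smul, smul_eq_mul]
  field_simp
  ring

theorem tendsto_exp_neg_div_mul_eval {l : Filter ℝ} (hε : ε ≠ 0) (p : ℝ[X])
    (hl : Tendsto (· / ε) l atTop) :
    Tendsto (fun x => Real.exp (-x / ε) * p.eval x) l (𝓝 0) := by
  have key : ∀ x, Real.exp (-x / ε) * p.eval x
      = (p.comp (C ε * X)).eval (x / ε) / Real.exp (x / ε) := fun x => by
    rw [eval_comp, eval_mul, eval_C, eval_X, mul_div_cancel₀ _ hε, neg_div, Real.exp_neg,
      mul_comm, ← div_eq_mul_inv]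
  simp_rw [key]
  exact (tendsto_div_exp_atTop _).comp hl

theorem exists_mem_Ioo_isRoot_sub_smul_derivative (hε : ε ≠ 0) {a b : ℝ} (hab : a < b)
    (ha : p.IsRoot a) (hb : p.IsRoot b) :
    ∃ c ∈ Set.Ioo a b, (p - ε • derivative p).IsRoot c := by
  obtain ⟨c, hc, hc0⟩ := exists_hasDerivAt_eq_zero hab
    (fun x _ => (hasDerivAt_exp_neg_div_mul_eval hε p x).continuousAt.continuousWithinAt)
    (by simp [ha.eq_zero, hb.eq_zero]) fun x _ => hasDerivAt_exp_neg_div_mul_eval hε p x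
  exact ⟨c, hc, by simpa [hε, Real.exp_ne_zero] using hc0⟩

theorem exists_isRoot_sub_smul_derivative_notMem_Icc (hε : ε ≠ 0) (hp : p ≠ 0) {a : ℝ}
    (ha : p.IsRoot a) :
    ∃ c, (p - ε • derivative p).IsRoot c ∧ ∀ x y, p.IsRoot x → p.IsRoot y → c ∉ Set.Icc x y := by
  set s := p.roots.toFinset
  have hmem : ∀ x, p.IsRoot x ↔ x ∈ s := fun x => by simp [s, mem_roots hp]
  have hs : s.Nonempty := ⟨a, (hmem a).1 ha⟩
  have hf := hasDerivAt_exp_neg_div_mul_eval hε p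
  rcases hε.lt_or_gt with hneg | hpos
  · obtain ⟨c, hc, hc0⟩ := exists_lt_hasDerivAt_eq_zero_of_tendsto_atBot
      (sub_one_lt (s.min' hs)) hf (by simp [((hmem _).2 (s.min'_mem hs)).eq_zero])
      (mul_ne_zero (Real.exp_ne_zero _) fun h =>
        (sub_one_lt _).not_ge (s.min'_le _ ((hmem _).1 h)))
      (tendsto_exp_neg_div_mul_eval hε p (by
        simpa only [div_eq_mul_inv, id] using
          tendsto_id.atBot_mul_const_of_neg (inv_lt_zero.2 hneg)))
    refine ⟨c, by simpa [hε, Real.exp_ne_zero] using hc0, fun x y hx _ hcxy => ?_⟩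
    exact (hc.trans_le (s.min'_le x ((hmem x).1 hx))).not_ge hcxy.1
  · obtain ⟨c, hc, hc0⟩ := exists_gt_hasDerivAt_eq_zero_of_tendsto_atTop
      (lt_add_one (s.max' hs)) hf (by simp [((hmem _).2 (s.max'_mem hs)).eq_zero])
      (mul_ne_zero (Real.exp_ne_zero _) fun h =>
        (lt_add_one _).not_ge (s.le_max' _ ((hmem _).1 h)))
      (tendsto_exp_neg_div_mul_eval hε p (tendsto_id.atTop_div_const hpos))
    refine ⟨c, by simpa [hε, Real.exp_ne_zero] using hc0, fun x y _ hy hcxy => ?_⟩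
    exact ((s.le_max' y ((hmem y).1 hy)).trans_lt hc).not_ge hcxy.2

theorem card_roots_toFinset_le_card_roots_sub_smul_derivative_sdiff (hε : ε ≠ 0) (hp : p ≠ 0) :
    p.roots.toFinset.card ≤
      ((p - ε • derivative p).roots.toFinset \ p.roots.toFinset).card := by
  have hq := sub_smul_derivative_ne_zero hp ε
  have hroot : ∀ {x}, x ∈ p.roots.toFinset → p.IsRoot x := fun hx =>
    isRoot_of_mem_roots (Multiset.mem_toFinset.1 hx)
  rcases p.roots.toFinset.eq_empty_or_nonempty with hs | ⟨a, ha⟩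
  · simp [hs]
  obtain ⟨c, hc, hcout⟩ := exists_isRoot_sub_smul_derivative_notMem_Icc hε hp (hroot ha)
  have hct : c ∈ (p - ε • derivative p).roots.toFinset \ p.roots.toFinset :=
    mem_sdiff.2 ⟨Multiset.mem_toFinset.2 ((mem_roots hq).2 hc),
      fun h => hcout c c (hroot h) (hroot h) ⟨le_rfl, le_rfl⟩⟩
  calc p.roots.toFinset.card
      ≤ ((p - ε • derivative p).roots.toFinset.erase c \ p.roots.toFinset).card + 1 :=
        card_le_sdiff_of_interleaved fun x hx y hy hxy _ => by
          obtain ⟨z, hz, hzq⟩ :=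
            exists_mem_Ioo_isRoot_sub_smul_derivative hε hxy (hroot hx) (hroot hy)
          refine ⟨z, mem_erase.2 ⟨?_, Multiset.mem_toFinset.2 ((mem_roots hq).2 hzq)⟩, hz⟩
          rintro rfl
          exact hcout x y (hroot hx) (hroot hy) (Set.Ioo_subset_Icc_self hz)
    _ = _ := by rw [erase_sdiff_comm, card_erase_add_one hct]

theorem sub_dedup_add_sdiff_le_roots_sub_smul_derivative (hε : ε ≠ 0) (hp : p ≠ 0) :
    p.roots - p.roots.dedup + ((p - ε • derivative p).roots.toFinset \ p.roots.toFinset).val ≤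
      (p - ε • derivative p).roots := by
  refine Multiset.le_iff_count.2 fun a => ?_
  rw [Multiset.count_add, Multiset.count_sub, Multiset.count_dedup]
  by_cases ha : p.IsRoot a
  · have hnew : a ∉ ((p - ε • derivative p).roots.toFinset \ p.roots.toFinset).val := fun h =>
      (Finset.mem_sdiff.1 h).2 (Multiset.mem_toFinset.2 ((mem_roots hp).2 ha))
    rw [if_pos ((mem_roots hp).2 ha), Multiset.count_eq_zero.2 hnew, count_roots, count_roots,
      rootMultiplicity_sub_smul_derivative hε hp ha, add_zero]
  · rw [if_neg (by rwa [mem_roots hp]), Multiset.count_eq_zero.2 (by rwa [mem_roots hp]),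
      zero_tsub, zero_add]
    exact Multiset.count_le_of_le _
      ((Finset.val_le_iff.2 sdiff_subset).trans (Multiset.dedup_le _))

theorem card_roots_le_card_sub_dedup_add_sdiff (hε : ε ≠ 0) (hp : p ≠ 0) :
    Multiset.card p.roots ≤ Multiset.card (p.roots - p.roots.dedup +
      ((p - ε • derivative p).roots.toFinset \ p.roots.toFinset).val) := by
  have hnew := card_roots_toFinset_le_card_roots_sub_smul_derivative_sdiff hε hp
  have hdedup := Multiset.card_le_card (Multiset.dedup_le p.roots)
  rw [Multiset.card_toFinset] at hnew
  rw [Multiset.card_add, Multiset.card_sub (Multiset.dedup_le _), card_val]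
  omega

theorem Splits.sub_smul_derivative (hε : ε ≠ 0) (hsplit : p.Splits) :
    (p - ε • derivative p).Splits := by
  rcases eq_or_ne p 0 with rfl | hp
  · simp
  refine splits_iff_card_roots.2 (le_antisymm (card_roots' _) ?_)
  calc (p - ε • derivative p).natDegree
      = Multiset.card p.roots := by
        rw [natDegree_sub_smul_derivative, splits_iff_card_roots.1 hsplit]
    _ ≤ _ := card_roots_le_card_sub_dedup_add_sdiff hε hp
    _ ≤ _ := Multiset.card_le_card (sub_dedup_add_sdiff_le_roots_sub_smul_derivative hε hp)

/-- The roots of `p` lose one unit of multiplicity and all new roots are simple. -/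
theorem roots_sub_smul_derivative (hε : ε ≠ 0) (hp : p ≠ 0) (hsplit : p.Splits) :
    (p - ε • derivative p).roots = p.roots - p.roots.dedup +
      ((p - ε • derivative p).roots.toFinset \ p.roots.toFinset).val := by
  refine (Multiset.eq_of_le_of_card_le
    (sub_dedup_add_sdiff_le_roots_sub_smul_derivative hε hp) ?_).symm
  calc Multiset.card (p - ε • derivative p).roots
      ≤ Multiset.card p.roots := by
        rw [splits_iff_card_roots.1 hsplit, ← natDegree_sub_smul_derivative p ε]
        exact card_roots' _
    _ ≤ _ := card_roots_le_card_sub_dedup_add_sdiff hε hp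

theorem rootMultiplicity_sub_smul_derivative_le (hε : ε ≠ 0) (hp : p ≠ 0) (hsplit : p.Splits)
    (a : ℝ) : (p - ε • derivative p).rootMultiplicity a ≤ max 1 (p.rootMultiplicity a - 1) := by
  by_cases ha : p.IsRoot a
  · rw [rootMultiplicity_sub_smul_derivative hε hp ha]
    exact le_max_right _ _
  · have hA : a ∉ p.roots - p.roots.dedup := fun h =>
      ha (isRoot_of_mem_roots (Multiset.mem_of_le (Multiset.sub_le_self _ _) h))
    rw [← count_roots, roots_sub_smul_derivative hε hp hsplit, Multiset.count_add,
      Multiset.count_eq_zero.2 hA, zero_add]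
    exact (Multiset.nodup_iff_count_le_one.1 (Finset.nodup _) a).trans (le_max_left _ _)

theorem Splits.oneSubSmulDerivative_pow_apply (hε : ε ≠ 0) (hsplit : p.Splits) (k : ℕ) :
    ((oneSubSmulDerivative ε ^ k) p).Splits := by
  induction k with
  | zero => exact hsplit
  | succ k ih => rw [oneSubSmulDerivative_pow_succ_apply]; exact ih.sub_smul_derivative hε

theorem rootMultiplicity_oneSubSmulDerivative_pow_apply_le (hε : ε ≠ 0) (hp : p ≠ 0)
    (hsplit : p.Splits) (k : ℕ) (a : ℝ) :
    ((oneSubSmulDerivative ε ^ k) p).rootMultiplicity a ≤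
      max 1 (p.rootMultiplicity a - k) := by
  induction k with
  | zero => exact le_max_right _ _
  | succ k ih =>
    rw [oneSubSmulDerivative_pow_succ_apply]
    refine (rootMultiplicity_sub_smul_derivative_le hε
      (oneSubSmulDerivative_pow_apply_ne_zero hp ε k)
      (hsplit.oneSubSmulDerivative_pow_apply hε k) a).trans ?_
    omega

theorem nodup_roots_oneSubSmulDerivative_pow_apply (hε : ε ≠ 0) (hp : p ≠ 0)
    (hsplit : p.Splits) {k : ℕ} (hk : p.natDegree ≤ k + 1) :
    ((oneSubSmulDerivative ε ^ k) p).roots.Nodup :=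
  Multiset.nodup_iff_count_le_one.2 fun a => by
    have hle := rootMultiplicity_oneSubSmulDerivative_pow_apply_le hε hp hsplit k a
    have hpa : p.rootMultiplicity a ≤ p.natDegree :=
      (count_roots p ▸ Multiset.count_le_card a p.roots).trans (card_roots' p)
    rw [count_roots]
    omega

end Real

end Polynomial

/-- For a monic hyperbolic `P` of degree `n ≥ 2` and `ε ≠ 0`, the polynomial
`(1 - εD)^{n-1} P` is monic strictly hyperbolic of degree `n`; moreover these approximants
converge to `P` uniformly on compact sets as `ε → 0`. -/
theorem strict_hyperbolic_approximation
    (n : ℕ) (hn : 2 ≤ n) (x : ℕ → ℝ) (P : Polynomial ℝ)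
    (hP : P = ∏ i ∈ Finset.range n, (X - C (x i)))
    (Q : ℝ → Polynomial ℝ)
    (hQ : Q = fun ε => ∑ k ∈ Finset.range n,
      C ((((n - 1).choose k : ℕ) : ℝ) * (-ε) ^ k) * derivative^[k] P) :
    (∀ ε : ℝ, ε ≠ 0 → ∃ y : ℕ → ℝ,
      (∀ i, i + 1 < n → y i < y (i + 1)) ∧
      Q ε = ∏ i ∈ Finset.range n, (X - C (y i))) ∧
    ∀ K : Set ℝ, IsCompact K →
      TendstoUniformlyOn (fun (ε : ℝ) (z : ℝ) => (Q ε).eval z)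
        (fun z => P.eval z) (nhds 0) K := by
  have hPm : P.Monic := hP ▸ monic_prod_of_monic _ _ fun i _ => monic_X_sub_C (x i)
  have hPsplit : P.Splits := hP ▸ Splits.prod fun i _ => Splits.X_sub_C (x i)
  have hPdeg : P.natDegree = n := by
    simp [hP, natDegree_prod_of_monic _ _ fun i _ => monic_X_sub_C (x i)]
  have hQpow : ∀ ε, Q ε = (oneSubSmulDerivative ε ^ (n - 1)) P := fun ε => by
    rw [hQ, oneSubSmulDerivative_pow_apply, Nat.sub_add_cancel (by omega)]
  refine ⟨fun ε hε => ?_, fun K hK => ?_⟩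
  · rw [hQpow]
    simpa only [natDegree_oneSubSmulDerivative_pow_apply, hPdeg] using
      (hPm.oneSubSmulDerivative_pow_apply ε (n - 1)).exists_strictMono_eq_prod_X_sub_C
        (hPsplit.oneSubSmulDerivative_pow_apply hε (n - 1))
        (nodup_roots_oneSubSmulDerivative_pow_apply hε hPm.ne_zero hPsplit (by omega))
  · have hQ0 : Q 0 = P := by
      rw [hQpow, oneSubSmulDerivative, zero_smul, sub_zero, one_pow, Module.End.one_apply]
    have hcont : Continuous ↿fun (ε z : ℝ) => (Q ε).eval z := by
      simp only [hQ, eval_finsetSum, eval_mul, eval_C]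
      fun_prop
    simpa only [hQ0] using hcont.tendstoUniformlyOn_of_isCompact hK 0
end
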